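/- arXiv:2105.01532 — 6 statements merged into one kernel-verified Lean document; each statement's English description precedes it below -/
import Mathlib

section
/- Let n ≥ 5 be odd and work in Sym(2n) on Ω = {1,...,2n}. Define t₁ = ∏_{i=0}^{⌊(n-2)/2⌋} (1+2i, 2+2i)(n+1+2i, n+2+2i) and t₂ = ∏_{i=1}^{⌊(n-3)/2⌋} (2+2i, 3+2i)(n+2+2i, n+3+2i). Then the product t₁t₂ has order 2n−4. -/
open Equiv

/-- `t₁ = ∏_{i=0}^{⌊(n-2)/2⌋} (1+2i, 2+2i)(n+1+2i, n+2+2i)` in `Sym(2n)` (as a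
permutation of `ℕ`). -/
def t1 (n : ℕ) : Equiv.Perm ℕ :=
  ((List.range ((n - 2) / 2 + 1)).map
    (fun i => Equiv.swap (1 + 2*i) (2 + 2*i) * Equiv.swap (n+1+2*i) (n+2+2*i))).prod

/-- `t₂ = ∏_{i=1}^{⌊(n-3)/2⌋} (2+2i, 3+2i)(n+2+2i, n+3+2i)`. -/
def t2 (n : ℕ) : Equiv.Perm ℕ :=
  ((List.range ((n - 3) / 2)).map
    (fun j => Equiv.swap (2 + 2*(j+1)) (3 + 2*(j+1)) *
      Equiv.swap (n+2+2*(j+1)) (n+3+2*(j+1)))).prod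

/-- `t₃ = (1,3)(2,4)(n+1,n+3)(n+2,n+4)`. -/
def t3 (n : ℕ) : Equiv.Perm ℕ :=
  Equiv.swap 1 3 * Equiv.swap 2 4 * Equiv.swap (n+1) (n+3) * Equiv.swap (n+2) (n+4)

/-- `t₄ = (1,2)(n+1,n+2) ∏_{i=1}^{n-2} (2+i, n+2+i)`. -/
def t4 (n : ℕ) : Equiv.Perm ℕ :=
  Equiv.swap 1 2 * Equiv.swap (n+1) (n+2) *
    ((List.range (n - 2)).map (fun j => Equiv.swap (2 + (j+1)) (n+2+(j+1)))).prod


private lemma prod_fix (f : ℕ → Equiv.Perm ℕ) (M x : ℕ) (h : ∀ i < M, f i x = x) :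
    ((List.range M).map f).prod x = x := by
  induction M with
  | zero => simp
  | succ M ih =>
    rw [List.range_succ, List.map_append, List.prod_append, List.map_singleton,
      List.prod_singleton, Equiv.Perm.mul_apply, h M (Nat.lt_succ_self M)]
    exact ih fun i hi => h i (Nat.lt_succ_of_lt hi)

private lemma prod_single (f : ℕ → Equiv.Perm ℕ) (M : ℕ) :
    ∀ i x y, i < M → f i x = y →
    (∀ j, j < M → j ≠ i → f j x = x) →
    (∀ j, j < M → j ≠ i → f j y = y) →
    ((List.range M).map f).prod x = y := by
  induction M with
  | zero => intro i x y hi _ _ _; exact absurd hi (Nat.not_lt_zero i)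
  | succ M ih =>
    intro i x y hi hy h1 h2
    subst hy
    rw [List.range_succ, List.map_append, List.prod_append, List.map_singleton,
      List.prod_singleton, Equiv.Perm.mul_apply]
    rcases eq_or_ne i M with rfl | hne
    · exact prod_fix f i (f i x) fun j hj => h2 j (by omega) (by omega)
    · rw [h1 M (by omega) (Ne.symm hne)]
      exact ih i x _ (by omega) rfl (fun j hj hj' => h1 j (by omega) hj')
        (fun j hj hj' => h2 j (by omega) hj')

private lemma ss_fix (a b c d x : ℕ) (h1 : x ≠ a) (h2 : x ≠ b) (h3 : x ≠ c) (h4 : x ≠ d) :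
    (Equiv.swap a b * Equiv.swap c d) x = x := by
  rw [Equiv.Perm.mul_apply, Equiv.swap_apply_of_ne_of_ne h3 h4,
    Equiv.swap_apply_of_ne_of_ne h1 h2]

private lemma ss_a (a b c d : ℕ) (h1 : a ≠ c) (h2 : a ≠ d) :
    (Equiv.swap a b * Equiv.swap c d) a = b := by
  rw [Equiv.Perm.mul_apply, Equiv.swap_apply_of_ne_of_ne h1 h2, Equiv.swap_apply_left]

private lemma ss_b (a b c d : ℕ) (h1 : b ≠ c) (h2 : b ≠ d) :
    (Equiv.swap a b * Equiv.swap c d) b = a := by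
  rw [Equiv.Perm.mul_apply, Equiv.swap_apply_of_ne_of_ne h1 h2, Equiv.swap_apply_right]

private lemma ss_c (a b c d : ℕ) (h1 : d ≠ a) (h2 : d ≠ b) :
    (Equiv.swap a b * Equiv.swap c d) c = d := by
  rw [Equiv.Perm.mul_apply, Equiv.swap_apply_left, Equiv.swap_apply_of_ne_of_ne h1 h2]

private lemma ss_d (a b c d : ℕ) (h1 : c ≠ a) (h2 : c ≠ b) :
    (Equiv.swap a b * Equiv.swap c d) d = c := by
  rw [Equiv.Perm.mul_apply, Equiv.swap_apply_right, Equiv.swap_apply_of_ne_of_ne h1 h2]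

-- t1 evaluation lemmas
private lemma t1_fix (m x : ℕ) (h : x = 0 ∨ x = 2*m+3 ∨ 4*m+6 ≤ x) : t1 (2*m+3) x = x := by
  unfold t1
  rw [show (2*m+3 - 2) / 2 + 1 = m+1 from by omega]
  exact prod_fix _ (m+1) x fun i hi =>
    ss_fix _ _ _ _ _ (by omega) (by omega) (by omega) (by omega)

private lemma t1_ap₁ (m i x : ℕ) (hi : i ≤ m) (hx : x = 1+2*i) :
    t1 (2*m+3) x = 2+2*i := by
  subst hx; unfold t1
  rw [show (2*m+3 - 2) / 2 + 1 = m+1 from by omega]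
  exact prod_single _ (m+1) i _ _ (by omega) (ss_a _ _ _ _ (by omega) (by omega))
    (fun p hp hne => ss_fix _ _ _ _ _ (by omega) (by omega) (by omega) (by omega))
    (fun p hp hne => ss_fix _ _ _ _ _ (by omega) (by omega) (by omega) (by omega))

private lemma t1_ap₂ (m i x : ℕ) (hi : i ≤ m) (hx : x = 2+2*i) :
    t1 (2*m+3) x = 1+2*i := by
  subst hx; unfold t1
  rw [show (2*m+3 - 2) / 2 + 1 = m+1 from by omega]
  exact prod_single _ (m+1) i _ _ (by omega) (ss_b _ _ _ _ (by omega) (by omega))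
    (fun p hp hne => ss_fix _ _ _ _ _ (by omega) (by omega) (by omega) (by omega))
    (fun p hp hne => ss_fix _ _ _ _ _ (by omega) (by omega) (by omega) (by omega))

private lemma t1_ap₃ (m i x : ℕ) (hi : i ≤ m) (hx : x = 2*m+3+1+2*i) :
    t1 (2*m+3) x = 2*m+3+2+2*i := by
  subst hx; unfold t1
  rw [show (2*m+3 - 2) / 2 + 1 = m+1 from by omega]
  exact prod_single _ (m+1) i _ _ (by omega) (ss_c _ _ _ _ (by omega) (by omega))
    (fun p hp hne => ss_fix _ _ _ _ _ (by omega) (by omega) (by omega) (by omega))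
    (fun p hp hne => ss_fix _ _ _ _ _ (by omega) (by omega) (by omega) (by omega))

private lemma t1_ap₄ (m i x : ℕ) (hi : i ≤ m) (hx : x = 2*m+3+2+2*i) :
    t1 (2*m+3) x = 2*m+3+1+2*i := by
  subst hx; unfold t1
  rw [show (2*m+3 - 2) / 2 + 1 = m+1 from by omega]
  exact prod_single _ (m+1) i _ _ (by omega) (ss_d _ _ _ _ (by omega) (by omega))
    (fun p hp hne => ss_fix _ _ _ _ _ (by omega) (by omega) (by omega) (by omega))
    (fun p hp hne => ss_fix _ _ _ _ _ (by omega) (by omega) (by omega) (by omega))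

-- t2 evaluation lemmas
private lemma t2_fix (m x : ℕ) (h : x ≤ 3 ∨ (2*m+4 ≤ x ∧ x ≤ 2*m+6) ∨ 4*m+7 ≤ x) :
    t2 (2*m+3) x = x := by
  unfold t2
  rw [show (2*m+3 - 3) / 2 = m from by omega]
  exact prod_fix _ m x fun j hj =>
    ss_fix _ _ _ _ _ (by omega) (by omega) (by omega) (by omega)

private lemma t2_ap₁ (m j x : ℕ) (hj : j < m) (hx : x = 2+2*(j+1)) :
    t2 (2*m+3) x = 3+2*(j+1) := by
  subst hx; unfold t2
  rw [show (2*m+3 - 3) / 2 = m from by omega]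
  exact prod_single _ m j _ _ hj (ss_a _ _ _ _ (by omega) (by omega))
    (fun p hp hne => ss_fix _ _ _ _ _ (by omega) (by omega) (by omega) (by omega))
    (fun p hp hne => ss_fix _ _ _ _ _ (by omega) (by omega) (by omega) (by omega))

private lemma t2_ap₂ (m j x : ℕ) (hj : j < m) (hx : x = 3+2*(j+1)) :
    t2 (2*m+3) x = 2+2*(j+1) := by
  subst hx; unfold t2
  rw [show (2*m+3 - 3) / 2 = m from by omega]
  exact prod_single _ m j _ _ hj (ss_b _ _ _ _ (by omega) (by omega))
    (fun p hp hne => ss_fix _ _ _ _ _ (by omega) (by omega) (by omega) (by omega))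
    (fun p hp hne => ss_fix _ _ _ _ _ (by omega) (by omega) (by omega) (by omega))

private lemma t2_ap₃ (m j x : ℕ) (hj : j < m) (hx : x = 2*m+3+2+2*(j+1)) :
    t2 (2*m+3) x = 2*m+3+3+2*(j+1) := by
  subst hx; unfold t2
  rw [show (2*m+3 - 3) / 2 = m from by omega]
  exact prod_single _ m j _ _ hj (ss_c _ _ _ _ (by omega) (by omega))
    (fun p hp hne => ss_fix _ _ _ _ _ (by omega) (by omega) (by omega) (by omega))
    (fun p hp hne => ss_fix _ _ _ _ _ (by omega) (by omega) (by omega) (by omega))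

private lemma t2_ap₄ (m j x : ℕ) (hj : j < m) (hx : x = 2*m+3+3+2*(j+1)) :
    t2 (2*m+3) x = 2*m+3+2+2*(j+1) := by
  subst hx; unfold t2
  rw [show (2*m+3 - 3) / 2 = m from by omega]
  exact prod_single _ m j _ _ hj (ss_d _ _ _ _ (by omega) (by omega))
    (fun p hp hne => ss_fix _ _ _ _ _ (by omega) (by omega) (by omega) (by omega))
    (fun p hp hne => ss_fix _ _ _ _ _ (by omega) (by omega) (by omega) (by omega))

/-- Parametrization of the cycle `3 → 4 → 6 → ⋯ → n-1 → n → n-2 → ⋯ → 5 → 3`. -/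
private def gcyc (m k : ℕ) : ℕ := if k = 0 then 3 else if k ≤ m then 2*k+2 else 4*m+5-2*k

private lemma key_low (m : ℕ) (hm : 1 ≤ m) (k : ℕ) (hk : k < 2*m+1) :
    (t1 (2*m+3) * t2 (2*m+3)) (gcyc m k) = gcyc m ((k+1) % (2*m+1)) := by
  rw [Equiv.Perm.mul_apply]
  rcases (by omega : k = 0 ∨ (1 ≤ k ∧ k ≤ m-1) ∨ k = m ∨ (m+1 ≤ k ∧ k ≤ 2*m-1) ∨ k = 2*m)
    with rfl | ⟨hk1, hk2⟩ | hkm | ⟨hk1, hk2⟩ | hkm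
  · rw [show gcyc m 0 = 3 from by
        simp only [gcyc]; split_ifs <;> first | omega | exact ‹False›.elim,
      t2_fix m 3 (by omega), t1_ap₁ m 1 3 (by omega) (by omega),
      Nat.mod_eq_of_lt (by omega)]
    simp only [gcyc]; split_ifs <;> first | omega | exact ‹False›.elim
  · rw [show gcyc m k = 2+2*((k-1)+1) from by
        simp only [gcyc]; split_ifs <;> first | omega | exact ‹False›.elim,
      t2_ap₁ m (k-1) _ (by omega) rfl, t1_ap₁ m (k+1) _ (by omega) (by omega),
      Nat.mod_eq_of_lt (by omega)]
    simp only [gcyc]; split_ifs <;> first | omega | exact ‹False›.elim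
  · rw [show gcyc m k = 2+2*((m-1)+1) from by
        simp only [gcyc]; split_ifs <;> first | omega | exact ‹False›.elim,
      t2_ap₁ m (m-1) _ (by omega) rfl, t1_fix m _ (by omega),
      Nat.mod_eq_of_lt (by omega)]
    simp only [gcyc]; split_ifs <;> first | omega | exact ‹False›.elim
  · rw [show gcyc m k = 3+2*((2*m-k)+1) from by
        simp only [gcyc]; split_ifs <;> first | omega | exact ‹False›.elim,
      t2_ap₂ m (2*m-k) _ (by omega) rfl, t1_ap₂ m (2*m+1-k) _ (by omega) (by omega),
      Nat.mod_eq_of_lt (by omega)]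
    simp only [gcyc]; split_ifs <;> first | omega | exact ‹False›.elim
  · rw [show gcyc m k = 3+2*(0+1) from by
        simp only [gcyc]; split_ifs <;> first | omega | exact ‹False›.elim,
      t2_ap₂ m 0 _ (by omega) rfl, t1_ap₂ m 1 _ (by omega) (by omega),
      show (k+1) % (2*m+1) = 0 from by
        rw [show k+1 = 2*m+1 from by omega]; exact Nat.mod_self _]
    simp only [gcyc]; split_ifs <;> first | omega | exact ‹False›.elim

private lemma key_high (m : ℕ) (hm : 1 ≤ m) (k : ℕ) (hk : k < 2*m+1) :
    (t1 (2*m+3) * t2 (2*m+3)) (2*m+3 + gcyc m k) = 2*m+3 + gcyc m ((k+1) % (2*m+1)) := by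
  rw [Equiv.Perm.mul_apply]
  rcases (by omega : k = 0 ∨ (1 ≤ k ∧ k ≤ m-1) ∨ k = m ∨ (m+1 ≤ k ∧ k ≤ 2*m-1) ∨ k = 2*m)
    with rfl | ⟨hk1, hk2⟩ | hkm | ⟨hk1, hk2⟩ | hkm
  · rw [show 2*m+3 + gcyc m 0 = 2*m+6 from by
        simp only [gcyc]; split_ifs <;> first | omega | exact ‹False›.elim,
      t2_fix m _ (by omega), t1_ap₃ m 1 _ (by omega) (by omega),
      Nat.mod_eq_of_lt (by omega)]
    simp only [gcyc]; split_ifs <;> first | omega | exact ‹False›.elim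
  · rw [show 2*m+3 + gcyc m k = 2*m+3+2+2*((k-1)+1) from by
        simp only [gcyc]; split_ifs <;> first | omega | exact ‹False›.elim,
      t2_ap₃ m (k-1) _ (by omega) rfl, t1_ap₃ m (k+1) _ (by omega) (by omega),
      Nat.mod_eq_of_lt (by omega)]
    simp only [gcyc]; split_ifs <;> first | omega | exact ‹False›.elim
  · rw [show 2*m+3 + gcyc m k = 2*m+3+2+2*((m-1)+1) from by
        simp only [gcyc]; split_ifs <;> first | omega | exact ‹False›.elim,
      t2_ap₃ m (m-1) _ (by omega) rfl, t1_fix m _ (by omega),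
      Nat.mod_eq_of_lt (by omega)]
    simp only [gcyc]; split_ifs <;> first | omega | exact ‹False›.elim
  · rw [show 2*m+3 + gcyc m k = 2*m+3+3+2*((2*m-k)+1) from by
        simp only [gcyc]; split_ifs <;> first | omega | exact ‹False›.elim,
      t2_ap₄ m (2*m-k) _ (by omega) rfl, t1_ap₄ m (2*m+1-k) _ (by omega) (by omega),
      Nat.mod_eq_of_lt (by omega)]
    simp only [gcyc]; split_ifs <;> first | omega | exact ‹False›.elim
  · rw [show 2*m+3 + gcyc m k = 2*m+3+3+2*(0+1) from by
        simp only [gcyc]; split_ifs <;> first | omega | exact ‹False›.elim,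
      t2_ap₄ m 0 _ (by omega) rfl, t1_ap₄ m 1 _ (by omega) (by omega),
      show (k+1) % (2*m+1) = 0 from by
        rw [show k+1 = 2*m+1 from by omega]; exact Nat.mod_self _]
    simp only [gcyc]; split_ifs <;> first | omega | exact ‹False›.elim

private lemma s_one (m : ℕ) (hm : 1 ≤ m) : (t1 (2*m+3) * t2 (2*m+3)) 1 = 2 := by
  rw [Equiv.Perm.mul_apply, t2_fix m 1 (by omega), t1_ap₁ m 0 1 (by omega) (by omega)]

private lemma s_two (m : ℕ) (hm : 1 ≤ m) : (t1 (2*m+3) * t2 (2*m+3)) 2 = 1 := by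
  rw [Equiv.Perm.mul_apply, t2_fix m 2 (by omega), t1_ap₂ m 0 2 (by omega) (by omega)]

private lemma s_sw1 (m : ℕ) (hm : 1 ≤ m) :
    (t1 (2*m+3) * t2 (2*m+3)) (2*m+4) = 2*m+5 := by
  rw [Equiv.Perm.mul_apply, t2_fix m _ (by omega), t1_ap₃ m 0 _ (by omega) (by omega)]

private lemma s_sw2 (m : ℕ) (hm : 1 ≤ m) :
    (t1 (2*m+3) * t2 (2*m+3)) (2*m+5) = 2*m+4 := by
  rw [Equiv.Perm.mul_apply, t2_fix m _ (by omega), t1_ap₄ m 0 _ (by omega) (by omega)]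

private lemma s_fix (m x : ℕ) (h : x = 0 ∨ 4*m+7 ≤ x) :
    (t1 (2*m+3) * t2 (2*m+3)) x = x := by
  rw [Equiv.Perm.mul_apply, t2_fix m x (by omega), t1_fix m x (by omega)]

private lemma pow_fix (σ : Equiv.Perm ℕ) (x : ℕ) (j : ℕ) (h : σ x = x) : (σ^j) x = x := by
  induction j with
  | zero => rfl
  | succ j ih => rw [pow_succ, Equiv.Perm.mul_apply, h, ih]

private lemma pow_swap (σ : Equiv.Perm ℕ) (a b j : ℕ) (ha : σ a = b) (hb : σ b = a) :
    (σ^(2*j)) a = a := by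
  induction j with
  | zero => simp
  | succ j ih =>
    rw [show 2*(j+1) = 2*j+1+1 from by ring, pow_succ, pow_succ,
      Equiv.Perm.mul_apply, Equiv.Perm.mul_apply, ha, hb, ih]

private lemma pow_one_two (σ : Equiv.Perm ℕ) (h1 : σ 1 = 2) (h2 : σ 2 = 1) (j : ℕ)
    (hj : Odd j) : (σ^j) 1 = 2 := by
  obtain ⟨c, rfl⟩ := hj
  rw [pow_succ, Equiv.Perm.mul_apply, h1, pow_swap σ 2 1 c h2 h1]

private lemma pow_cycle (m : ℕ) (hm : 1 ≤ m) (j : ℕ) : ∀ k, k < 2*m+1 →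
    ((t1 (2*m+3) * t2 (2*m+3))^j) (gcyc m k) = gcyc m ((k+j) % (2*m+1)) := by
  induction j with
  | zero =>
    intro k hk
    simp [Nat.mod_eq_of_lt hk]
  | succ j ih =>
    intro k hk
    rw [pow_succ, Equiv.Perm.mul_apply, key_low m hm k hk,
      ih _ (Nat.mod_lt _ (by omega)), Nat.mod_add_mod,
      show k+1+j = k+(j+1) from by ring]

private lemma pow_cycle_high (m : ℕ) (hm : 1 ≤ m) (j : ℕ) : ∀ k, k < 2*m+1 →
    ((t1 (2*m+3) * t2 (2*m+3))^j) (2*m+3 + gcyc m k) = 2*m+3 + gcyc m ((k+j) % (2*m+1)) := by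
  induction j with
  | zero =>
    intro k hk
    simp [Nat.mod_eq_of_lt hk]
  | succ j ih =>
    intro k hk
    rw [pow_succ, Equiv.Perm.mul_apply, key_high m hm k hk,
      ih _ (Nat.mod_lt _ (by omega)), Nat.mod_add_mod,
      show k+1+j = k+(j+1) from by ring]

private lemma s_pow_period (m : ℕ) (hm : 1 ≤ m) :
    (t1 (2*m+3) * t2 (2*m+3)) ^ (2*(2*m+1)) = 1 := by
  ext x
  rw [Equiv.Perm.one_apply]
  rcases (by omega : x = 0 ∨ 4*m+7 ≤ x ∨ x = 1 ∨ x = 2 ∨ x = 2*m+4 ∨ x = 2*m+5 ∨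
      (3 ≤ x ∧ x ≤ 2*m+3) ∨ (2*m+6 ≤ x ∧ x ≤ 4*m+6))
    with rfl | h | rfl | rfl | rfl | rfl | ⟨h1x, h2x⟩ | ⟨h1x, h2x⟩
  · exact pow_fix _ 0 _ (s_fix m 0 (by omega))
  · exact pow_fix _ x _ (s_fix m x (by omega))
  · exact pow_swap _ 1 2 (2*m+1) (s_one m hm) (s_two m hm)
  · exact pow_swap _ 2 1 (2*m+1) (s_two m hm) (s_one m hm)
  · exact pow_swap _ (2*m+4) (2*m+5) (2*m+1) (s_sw1 m hm) (s_sw2 m hm)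
  · exact pow_swap _ (2*m+5) (2*m+4) (2*m+1) (s_sw2 m hm) (s_sw1 m hm)
  · obtain ⟨k, hk, rfl⟩ : ∃ k, k < 2*m+1 ∧ x = gcyc m k := by
      rcases Nat.even_or_odd x with ⟨c, rfl⟩ | ⟨c, rfl⟩
      · refine ⟨c-1, by omega, ?_⟩
        simp only [gcyc]; split_ifs <;> first | omega | exact ‹False›.elim
      · rcases (by omega : c = 1 ∨ 2 ≤ c) with rfl | hc
        · refine ⟨0, by omega, ?_⟩
          simp only [gcyc]; split_ifs <;> first | omega | exact ‹False›.elim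
        · refine ⟨2*m+2-c, by omega, ?_⟩
          simp only [gcyc]; split_ifs <;> first | omega | exact ‹False›.elim
    rw [pow_cycle m hm _ k hk, show (k + 2*(2*m+1)) % (2*m+1) = k from by
      rw [show k + 2*(2*m+1) = k + (2*m+1)*2 from by ring, Nat.add_mul_mod_self_left,
        Nat.mod_eq_of_lt hk]]
  · obtain ⟨k, hk, rfl⟩ : ∃ k, k < 2*m+1 ∧ x = 2*m+3 + gcyc m k := by
      rcases Nat.even_or_odd x with ⟨c, rfl⟩ | ⟨c, rfl⟩
      · rcases (by omega : c + c = 2*m+6 ∨ 2*m+8 ≤ c+c) with h | h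
        · refine ⟨0, by omega, ?_⟩
          simp only [gcyc]; split_ifs <;> first | omega | exact ‹False›.elim
        · refine ⟨3*m+4-c, by omega, ?_⟩
          simp only [gcyc]; split_ifs <;> first | omega | exact ‹False›.elim
      · refine ⟨c-(m+2), by omega, ?_⟩
        simp only [gcyc]; split_ifs <;> first | omega | exact ‹False›.elim
    rw [pow_cycle_high m hm _ k hk, show (k + 2*(2*m+1)) % (2*m+1) = k from by
      rw [show k + 2*(2*m+1) = k + (2*m+1)*2 from by ring, Nat.add_mul_mod_self_left,
        Nat.mod_eq_of_lt hk]]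

/-- For odd `n ≥ 5`, the product `t₁t₂` has order `2n − 4`. -/
theorem t1_mul_t2_orderOf (n : ℕ) (hn : 5 ≤ n) (hodd : Odd n) :
    orderOf (t1 n * t2 n) = 2 * n - 4 := by
  obtain ⟨c, hc⟩ := hodd
  obtain ⟨m, hm, hn'⟩ : ∃ m, 1 ≤ m ∧ n = 2*m+3 := ⟨(n-3)/2, by omega, by omega⟩
  subst hn'
  have hup : (t1 (2*m+3) * t2 (2*m+3)) ^ (2*(2*m+1)) = 1 := s_pow_period m hm
  have hdvd : orderOf (t1 (2*m+3) * t2 (2*m+3)) ∣ 2*(2*m+1) :=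
    orderOf_dvd_of_pow_eq_one hup
  have h2 : 2 ∣ orderOf (t1 (2*m+3) * t2 (2*m+3)) := by
    rcases Nat.even_or_odd (orderOf (t1 (2*m+3) * t2 (2*m+3))) with he | ho
    · exact he.two_dvd
    · exfalso
      have h1 : ((t1 (2*m+3) * t2 (2*m+3)) ^ orderOf (t1 (2*m+3) * t2 (2*m+3))) 1 = 2 :=
        pow_one_two _ (s_one m hm) (s_two m hm) _ ho
      rw [pow_orderOf_eq_one, Equiv.Perm.one_apply] at h1
      omega
  have hL : (2*m+1) ∣ orderOf (t1 (2*m+3) * t2 (2*m+3)) := by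
    have h3 := pow_cycle m hm (orderOf (t1 (2*m+3) * t2 (2*m+3))) 0 (by omega)
    rw [pow_orderOf_eq_one, Equiv.Perm.one_apply] at h3
    have hlt : orderOf (t1 (2*m+3) * t2 (2*m+3)) % (2*m+1) < 2*m+1 :=
      Nat.mod_lt _ (by omega)
    refine Nat.dvd_of_mod_eq_zero ?_
    rw [Nat.zero_add] at h3
    simp only [gcyc] at h3
    split_ifs at h3 <;> first | omega | exact ‹False›.elim
  have hcop : Nat.Coprime 2 (2*m+1) :=
    (Nat.prime_two.coprime_iff_not_dvd).mpr (by omega)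
  have : orderOf (t1 (2*m+3) * t2 (2*m+3)) = 2*(2*m+1) :=
    Nat.dvd_antisymm hdvd (hcop.mul_dvd_of_dvd_of_dvd h2 hL)
  rw [this]
  omega
end

section
/- Let n ≥ 5 be odd and work in Sym(2n). Define t₂ = ∏_{i=1}^{⌊(n-3)/2⌋} (2+2i, 3+2i)(n+2+2i, n+3+2i), t₃ = (1,3)(2,4)(n+1,n+3)(n+2,n+4), and t₄ = (1,2)(n+1,n+2)∏_{i=1}^{n-2}(2+i, n+2+i). Then t₂t₃ has order 6 and t₃t₄ has order 4. -/
open Equiv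

/-!
All three permutations are products of disjoint transpositions, so the two products can be
evaluated point by point. Write the points of `{1, …, 2n}` as `c + r` with `c ∈ {0, n}` and
`1 ≤ r ≤ n`. On each half, `t₂t₃` has the cycles `(c+1 c+3)`, `(c+2 c+5 c+4)` and the
transpositions `(c+4+2j c+5+2j)` for `j ≥ 1`, which exhaust `c+6, …, c+n` because `n` is odd;
so it has order `lcm(2,3) = 6`. The product `t₃t₄` has the two 4-cycles `(1 4 n+2 n+3)`,
`(2 3 n+1 n+4)` and the transpositions `(r n+r)` for `5 ≤ r ≤ n`, so it has order `4`.
-/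

namespace Equiv.Perm

variable {α : Type*}

theorem list_prod_map_range_apply_eq_self {f : ℕ → Perm α} {m : ℕ} {x : α}
    (h : ∀ j < m, f j x = x) : ((List.range m).map f).prod x = x := by
  induction m with
  | zero => rfl
  | succ k ih =>
    rw [List.range_succ, List.map_append, List.prod_append, mul_apply, List.map_singleton,
      List.prod_singleton, h k k.lt_succ_self, ih fun j hj => h j (hj.trans k.lt_succ_self)]

theorem list_prod_map_range_apply {f : ℕ → Perm α} {m i : ℕ} {x : α} (hi : i < m)
    (hx : ∀ j < m, j ≠ i → f j x = x) (hfx : ∀ j < m, j ≠ i → f j (f i x) = f i x) :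
    ((List.range m).map f).prod x = f i x := by
  induction m with
  | zero => omega
  | succ k ih =>
    rw [List.range_succ, List.map_append, List.prod_append, mul_apply, List.map_singleton,
      List.prod_singleton]
    rcases Nat.lt_succ_iff_lt_or_eq.mp hi with hik | rfl
    · rw [hx k k.lt_succ_self hik.ne',
        ih hik (fun j hj => hx j (hj.trans k.lt_succ_self))
          (fun j hj => hfx j (hj.trans k.lt_succ_self))]
    · exact list_prod_map_range_apply_eq_self fun j hj => hfx j (hj.trans i.lt_succ_self) hj.ne

theorem pow_eq_one_of_forall_isPeriodicPt {σ : Perm α} {m : ℕ}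
    (h : ∀ x, Function.IsPeriodicPt σ m x) : σ ^ m = 1 :=
  Equiv.ext fun x => by rw [coe_pow]; exact h x

end Equiv.Perm

section Cycles

open Function

variable {α : Type*} {f : α → α} {a b c d : α}

theorem isPeriodicPt_two_of_cycle (hab : f a = b) (hba : f b = a) : IsPeriodicPt f 2 a := by
  show f (f a) = a
  rw [hab, hba]

theorem isPeriodicPt_three_of_cycle (hab : f a = b) (hbc : f b = c) (hca : f c = a) :
    IsPeriodicPt f 3 a := by
  show f (f (f a)) = a
  rw [hab, hbc, hca]

theorem isPeriodicPt_four_of_cycle (hab : f a = b) (hbc : f b = c) (hcd : f c = d)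
    (hda : f d = a) : IsPeriodicPt f 4 a := by
  show f (f (f (f a))) = a
  rw [hab, hbc, hcd, hda]

end Cycles

theorem orderOf_eq_six {G : Type*} [Monoid G] {g : G} (h6 : g ^ 6 = 1) (h2 : g ^ 2 ≠ 1)
    (h3 : g ^ 3 ≠ 1) : orderOf g = 6 := by
  refine orderOf_eq_of_pow_and_pow_div_prime (by norm_num) h6 fun p hp hp6 => ?_
  rcases (Nat.Prime.dvd_mul hp).mp (show p ∣ 2 * 3 from hp6) with h | h
  · rwa [(Nat.prime_dvd_prime_iff_eq hp Nat.prime_two).mp h]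
  · rwa [(Nat.prime_dvd_prime_iff_eq hp Nat.prime_three).mp h]

theorem exists_eq_add_of_le_two_mul {n x : ℕ} (hx0 : x ≠ 0) (hxn : x ≤ 2 * n) :
    ∃ c r, (c = 0 ∨ c = n) ∧ 1 ≤ r ∧ r ≤ n ∧ x = c + r := by
  rcases le_or_gt x n with h | h
  · exact ⟨0, x, .inl rfl, by omega, h, by omega⟩
  · exact ⟨n, x - n, .inr rfl, by omega, by omega, by omega⟩

open Perm

section Evaluation

variable {n c j r x : ℕ}

theorem t2_apply_eq_self (hx : x < 4 ∨ n < x ∧ x < n + 4 ∨ 2 * n < x) : t2 n x = x :=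
  list_prod_map_range_apply_eq_self fun j hj => by
    simp (disch := omega) only [mul_apply, swap_apply_of_ne_of_ne]

theorem t2_apply_pair (hc : c = 0 ∨ c = n) (hj : j < (n - 3) / 2) :
    t2 n (c + (4 + 2 * j)) = c + (5 + 2 * j) ∧ t2 n (c + (5 + 2 * j)) = c + (4 + 2 * j) := by
  rcases hc with rfl | rfl <;> constructor <;>
    refine (list_prod_map_range_apply hj ?_ ?_).trans ?_ <;> intros <;>
    simp (disch := omega) only [mul_apply, swap_apply_def, if_pos, if_neg] <;> omega

theorem t3_apply_eq_self (hx : x = 0 ∨ 4 < x ∧ x ≤ n ∨ n + 4 < x) : t3 n x = x := by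
  simp (disch := omega) only [t3, mul_apply, swap_apply_of_ne_of_ne]

theorem t3_apply (hn : 4 ≤ n) (hc : c = 0 ∨ c = n) :
    t3 n (c + 1) = c + 3 ∧ t3 n (c + 2) = c + 4 ∧ t3 n (c + 3) = c + 1 ∧
      t3 n (c + 4) = c + 2 := by
  rcases hc with rfl | rfl <;> refine ⟨?_, ?_, ?_, ?_⟩ <;>
    simp (disch := omega) only [t3, mul_apply, swap_apply_def, if_neg, if_true]

theorem t4_apply_eq_swap_swap_apply (hx : x < 3 ∨ n < x ∧ x < n + 3 ∨ 2 * n < x) :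
    t4 n x = swap 1 2 (swap (n + 1) (n + 2) x) := by
  rw [t4, mul_apply, mul_apply, list_prod_map_range_apply_eq_self fun j hj => by
    simp (disch := omega) only [swap_apply_of_ne_of_ne]]

theorem t4_apply_eq_self (hn : 2 ≤ n) (hx : x = 0 ∨ 2 * n < x) : t4 n x = x := by
  simp (disch := omega) only [t4_apply_eq_swap_swap_apply, swap_apply_of_ne_of_ne]

theorem t4_apply (hn : 2 ≤ n) (hc : c = 0 ∨ c = n) :
    t4 n (c + 1) = c + 2 ∧ t4 n (c + 2) = c + 1 := by
  rcases hc with rfl | rfl <;> constructor <;>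
    simp (disch := omega) only [t4_apply_eq_swap_swap_apply, swap_apply_def, if_neg, if_true]

theorem t4_apply_half (hr3 : 3 ≤ r) (hrn : r ≤ n) : t4 n r = n + r ∧ t4 n (n + r) = r := by
  have hi : r - 3 < n - 2 := by omega
  constructor <;>
  · simp only [t4, mul_apply]
    rw [list_prod_map_range_apply hi] <;> intros <;>
      simp (disch := omega) only [swap_apply_def, if_pos, if_neg]
    omega

end Evaluation

open Function

section ProductTwoThree

variable {n c j x : ℕ}

theorem t2_mul_t3_apply_eq_self (hn : 4 ≤ n) (hx : x = 0 ∨ 2 * n < x) :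
    (t2 n * t3 n) x = x := by
  rw [mul_apply, t3_apply_eq_self (by omega), t2_apply_eq_self (by omega)]

theorem t2_mul_t3_apply (hn : 5 ≤ n) (hc : c = 0 ∨ c = n) :
    (t2 n * t3 n) (c + 1) = c + 3 ∧ (t2 n * t3 n) (c + 3) = c + 1 ∧
      (t2 n * t3 n) (c + 2) = c + 5 ∧ (t2 n * t3 n) (c + 5) = c + 4 ∧
      (t2 n * t3 n) (c + 4) = c + 2 := by
  obtain ⟨h1, h2, h3, h4⟩ := t3_apply (by omega) hc
  obtain ⟨h45, h54⟩ := t2_apply_pair (j := 0) hc (by omega)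
  refine ⟨?_, ?_, ?_, ?_, ?_⟩ <;> rw [mul_apply]
  · rw [h1, t2_apply_eq_self (by omega)]
  · rw [h3, t2_apply_eq_self (by omega)]
  · rw [h2]; exact h45
  · rw [t3_apply_eq_self (by omega)]; exact h54
  · rw [h4, t2_apply_eq_self (by omega)]

theorem t2_mul_t3_apply_pair (hc : c = 0 ∨ c = n) (hj0 : 0 < j) (hj : j < (n - 3) / 2) :
    (t2 n * t3 n) (c + (4 + 2 * j)) = c + (5 + 2 * j) ∧
      (t2 n * t3 n) (c + (5 + 2 * j)) = c + (4 + 2 * j) := by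
  simp only [mul_apply]
  rw [t3_apply_eq_self (by omega), t3_apply_eq_self (by omega)]
  exact t2_apply_pair hc hj

theorem isPeriodicPt_t2_mul_t3 (hn : 5 ≤ n) (hodd : Odd n) (x : ℕ) :
    IsPeriodicPt (t2 n * t3 n) 2 x ∨ IsPeriodicPt (t2 n * t3 n) 3 x := by
  by_cases hx : x = 0 ∨ 2 * n < x
  · exact .inl (IsFixedPt.isPeriodicPt (t2_mul_t3_apply_eq_self (by omega) hx) 2)
  obtain ⟨c, r, hc, hr1, hrn, rfl⟩ :=
    exists_eq_add_of_le_two_mul (n := n) (x := x) (by omega) (by omega)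
  obtain ⟨h1, h3, h2, h5, h4⟩ := t2_mul_t3_apply hn hc
  by_cases hr5 : r ≤ 5
  · interval_cases r
    · exact .inl (isPeriodicPt_two_of_cycle h1 h3)
    · exact .inr (isPeriodicPt_three_of_cycle h2 h5 h4)
    · exact .inl (isPeriodicPt_two_of_cycle h3 h1)
    · exact .inr (isPeriodicPt_three_of_cycle h4 h2 h5)
    · exact .inr (isPeriodicPt_three_of_cycle h5 h4 h2)
  obtain ⟨k, hk⟩ := hodd
  obtain ⟨j, hj0, hj, rfl | rfl⟩ :
      ∃ j, 0 < j ∧ j < (n - 3) / 2 ∧ (r = 4 + 2 * j ∨ r = 5 + 2 * j) :=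
    ⟨(r - 4) / 2, by omega, by omega, by omega⟩
  · obtain ⟨h, h'⟩ := t2_mul_t3_apply_pair hc hj0 hj
    exact .inl (isPeriodicPt_two_of_cycle h h')
  · obtain ⟨h, h'⟩ := t2_mul_t3_apply_pair hc hj0 hj
    exact .inl (isPeriodicPt_two_of_cycle h' h)

theorem orderOf_t2_mul_t3 (hn : 5 ≤ n) (hodd : Odd n) : orderOf (t2 n * t3 n) = 6 := by
  have h6 : (t2 n * t3 n) ^ 6 = 1 := pow_eq_one_of_forall_isPeriodicPt fun x =>
    (isPeriodicPt_t2_mul_t3 hn hodd x).elim (·.trans_dvd ⟨3, rfl⟩) (·.trans_dvd ⟨2, rfl⟩)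
  obtain ⟨h1, h3, h2, h5, -⟩ := t2_mul_t3_apply (c := 0) hn (.inl rfl)
  simp only [zero_add] at h1 h3 h2 h5
  refine orderOf_eq_six h6 (fun h => ?_) (fun h => ?_)
  · have : ((t2 n * t3 n) ^ 2) 2 = 4 := by rw [sq, mul_apply, h2, h5]
    simp [h] at this
  · have : ((t2 n * t3 n) ^ 3) 1 = 3 := by rw [pow_succ, sq, mul_apply, mul_apply, h1, h3, h1]
    simp [h] at this

end ProductTwoThree

section ProductThreeFour

variable {n r x : ℕ}

theorem t3_mul_t4_apply_eq_self (hn : 4 ≤ n) (hx : x = 0 ∨ 2 * n < x) :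
    (t3 n * t4 n) x = x := by
  rw [mul_apply, t4_apply_eq_self (by omega) hx, t3_apply_eq_self (by omega)]

theorem t3_mul_t4_apply (hn : 4 ≤ n) :
    (t3 n * t4 n) 1 = 4 ∧ (t3 n * t4 n) 4 = n + 2 ∧ (t3 n * t4 n) (n + 2) = n + 3 ∧
      (t3 n * t4 n) (n + 3) = 1 ∧ (t3 n * t4 n) 2 = 3 ∧ (t3 n * t4 n) 3 = n + 1 ∧
      (t3 n * t4 n) (n + 1) = n + 4 ∧ (t3 n * t4 n) (n + 4) = 2 := by
  obtain ⟨l1, l2, l3, l4⟩ := t3_apply (c := 0) hn (.inl rfl)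
  obtain ⟨u1, u2, u3, u4⟩ := t3_apply (c := n) hn (.inr rfl)
  obtain ⟨s1, s2⟩ := t4_apply (n := n) (c := 0) (by omega) (.inl rfl)
  obtain ⟨s1', s2'⟩ := t4_apply (n := n) (c := n) (by omega) (.inr rfl)
  obtain ⟨s3, s3'⟩ := t4_apply_half (n := n) (r := 3) le_rfl (by omega)
  obtain ⟨s4, s4'⟩ := t4_apply_half (n := n) (r := 4) (by omega) (by omega)
  simp only [zero_add] at l1 l2 l3 l4 s1 s2
  refine ⟨?_, ?_, ?_, ?_, ?_, ?_, ?_, ?_⟩ <;> rw [mul_apply]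
  · rw [s1, l2]
  · rw [s4, u4]
  · rw [s2', u1]
  · rw [s3', l3]
  · rw [s2, l1]
  · rw [s3, u3]
  · rw [s1', u2]
  · rw [s4', l4]

theorem t3_mul_t4_apply_half (hr5 : 5 ≤ r) (hrn : r ≤ n) :
    (t3 n * t4 n) r = n + r ∧ (t3 n * t4 n) (n + r) = r := by
  obtain ⟨h, h'⟩ := t4_apply_half (by omega) hrn
  rw [mul_apply, mul_apply, h, h', t3_apply_eq_self (by omega), t3_apply_eq_self (by omega)]
  exact ⟨rfl, rfl⟩

theorem isPeriodicPt_t3_mul_t4 (hn : 5 ≤ n) (x : ℕ) : IsPeriodicPt (t3 n * t4 n) 4 x := by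
  by_cases hx : x = 0 ∨ 2 * n < x
  · exact IsFixedPt.isPeriodicPt (t3_mul_t4_apply_eq_self (by omega) hx) 4
  obtain ⟨h1, h4, hn2, hn3, h2, h3, hn1, hn4⟩ := t3_mul_t4_apply (by omega : 4 ≤ n)
  rcases (by omega : x ≤ 4 ∨ 4 < x ∧ x ≤ n ∨ n < x) with hx4 | ⟨hx4, hxn⟩ | hxn
  · have hx1 : 1 ≤ x := by omega
    interval_cases x
    · exact isPeriodicPt_four_of_cycle h1 h4 hn2 hn3
    · exact isPeriodicPt_four_of_cycle h2 h3 hn1 hn4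
    · exact isPeriodicPt_four_of_cycle h3 hn1 hn4 h2
    · exact isPeriodicPt_four_of_cycle h4 hn2 hn3 h1
  · obtain ⟨h, h'⟩ := t3_mul_t4_apply_half hx4 hxn
    exact (isPeriodicPt_two_of_cycle h h').trans_dvd ⟨2, rfl⟩
  obtain ⟨r, hr1, hrn, rfl⟩ : ∃ r, 1 ≤ r ∧ r ≤ n ∧ x = n + r :=
    ⟨x - n, by omega, by omega, by omega⟩
  by_cases hr4 : r ≤ 4
  · interval_cases r
    · exact isPeriodicPt_four_of_cycle hn1 hn4 h2 h3
    · exact isPeriodicPt_four_of_cycle hn2 hn3 h1 h4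
    · exact isPeriodicPt_four_of_cycle hn3 h1 h4 hn2
    · exact isPeriodicPt_four_of_cycle hn4 h2 h3 hn1
  · obtain ⟨h, h'⟩ := t3_mul_t4_apply_half (by omega) hrn
    exact (isPeriodicPt_two_of_cycle h' h).trans_dvd ⟨2, rfl⟩

theorem orderOf_t3_mul_t4 (hn : 5 ≤ n) : orderOf (t3 n * t4 n) = 4 := by
  obtain ⟨h1, h4, -⟩ := t3_mul_t4_apply (by omega : 4 ≤ n)
  refine orderOf_eq_prime_pow (p := 2) (n := 1) (fun h => ?_)
    (pow_eq_one_of_forall_isPeriodicPt (isPeriodicPt_t3_mul_t4 hn))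
  have : ((t3 n * t4 n) ^ 2) 1 = n + 2 := by rw [sq, mul_apply, h1, h4]
  rw [pow_one] at h
  rw [h, one_apply] at this
  omega

end ProductThreeFour

/-- For odd `n ≥ 5`, `t₂t₃` has order `6` and `t₃t₄` has order `4`. -/
theorem orderOf_t2t3_and_t3t4 (n : ℕ) (hn : 5 ≤ n) (hodd : Odd n) :
    orderOf (t2 n * t3 n) = 6 ∧ orderOf (t3 n * t4 n) = 4 :=
  ⟨orderOf_t2_mul_t3 hn hodd, orderOf_t3_mul_t4 hn⟩
end

section
/- Let n ≥ 5 be odd. In Sym(2n), the subgroup G₂₃₄ = ⟨t₂, t₃, t₄⟩ is isomorphic to ℤ₂ × Sym(5), where t₂ = ∏_{i=1}^{⌊(n-3)/2⌋}(2+2i,3+2i)(n+2+2i,n+3+2i), t₃ = (1,3)(2,4)(n+1,n+3)(n+2,n+4), t₄ = (1,2)(n+1,n+2)∏_{i=1}^{n-2}(2+i,n+2+i). -/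
open Equiv

/-!
Write `n = 2k + 5` and regard a point of `{1, …, 2n}` as a column `c ∈ {1, …, n}` together with a
side (`c` or `n + c`). The generators permute the head columns `1, …, 5` among themselves and the
tail columns `6, …, n` in the pairs `(6, 7), (8, 9), …`. Once the two sides of the head columns
`2, 4, 5` are exchanged, `t₂, t₃, t₄` act on the head as the elements `(1, (4 5))`,
`(1, (1 3)(2 4))`, `(-1, (1 2))` of `ℤˣ × S₅` acting on `{1, …, 5} × {±1}`. On the tail `t₃` is
trivial, `t₂` swaps the columns of each pair and `t₄` swaps the sides, so the tail action is a
function of the head action: `(e, σ)` swaps the sides when `e = -1` and the paired columns when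
`e · sign σ = -1`. This is a faithful action of `ℤˣ × S₅` on `{1, …, 2n}` taking those three
elements to `t₂, t₃, t₄`, and they generate `ℤˣ × S₅` since
`((-1, (1 2)) · (1, (4 5)) · (1, (1 3)(2 4)))²` is `(1, 5-cycle)`.
-/

open Equiv.Perm

namespace Equiv.Perm

variable {ι α : Type*}

theorem list_prod_map_apply_of_forall {l : List ι} {f : ι → Perm α} {x : α}
    (h : ∀ i ∈ l, f i x = x) : (l.map f).prod x = x := by
  induction l with
  | nil => rfl
  | cons a l ih =>
    rw [List.map_cons, List.prod_cons, mul_apply, ih fun i hi => h i (.tail a hi),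
      h a List.mem_cons_self]

theorem list_prod_map_apply_of_mem {l : List ι} (hl : l.Nodup) {f : ι → Perm α} {x y : α}
    {i : ι} (hi : i ∈ l) (hxy : f i x = y) (h : ∀ j ∈ l, j ≠ i → f j x = x ∧ f j y = y) :
    (l.map f).prod x = y := by
  induction l with
  | nil => cases hi
  | cons a l ih =>
    rw [List.map_cons, List.prod_cons, mul_apply]
    obtain ⟨ha, hl⟩ := List.nodup_cons.mp hl
    obtain rfl | hi := List.mem_cons.mp hi
    · rw [list_prod_map_apply_of_forall fun j hj =>
        (h j (.tail _ hj) (ne_of_mem_of_not_mem hj ha)).1, hxy]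
    · have hai : a ≠ i := fun hai => ha (hai ▸ hi)
      rw [ih hl hi fun j hj => h j (.tail a hj), (h a List.mem_cons_self hai).2]

theorem eq_viaEmbedding_of_forall {β : Type*} {e : α ↪ β} {π : Perm α} {f : Perm β}
    (h : ∀ a, f (e a) = e (π a)) (hfix : ∀ b ∉ Set.range e, f b = b) :
    f = π.viaEmbedding e := by
  ext b
  by_cases hb : b ∈ Set.range e
  · obtain ⟨a, rfl⟩ := hb
    rw [h, viaEmbedding_apply]
  · rw [hfix b hb, viaEmbedding_apply_of_notMem _ _ _ hb]

end Equiv.Perm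

theorem t2_apply (n x : ℕ) : t2 n x =
    if 4 ≤ x ∧ x ≤ 3 + 2 * ((n - 3) / 2) then (if x % 2 = 0 then x + 1 else x - 1)
    else if n + 4 ≤ x ∧ x ≤ n + 3 + 2 * ((n - 3) / 2) then
      (if (x - n) % 2 = 0 then x + 1 else x - 1)
    else x := by
  rw [t2]
  by_cases h1 : 4 ≤ x ∧ x ≤ 3 + 2 * ((n - 3) / 2)
  · rw [if_pos h1]
    refine list_prod_map_apply_of_mem List.nodup_range (i := (x - 4) / 2)
      (List.mem_range.mpr (by omega)) ?_ fun j hj hji => ?_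
    · simp only [mul_apply, swap_apply_def]; split_ifs <;> omega
    · rw [List.mem_range] at hj
      simp only [mul_apply, swap_apply_def]; constructor <;> split_ifs <;> omega
  rw [if_neg h1]
  by_cases h2 : n + 4 ≤ x ∧ x ≤ n + 3 + 2 * ((n - 3) / 2)
  · rw [if_pos h2]
    refine list_prod_map_apply_of_mem List.nodup_range (i := (x - n - 4) / 2)
      (List.mem_range.mpr (by omega)) ?_ fun j hj hji => ?_
    · simp only [mul_apply, swap_apply_def]; split_ifs <;> omega
    · rw [List.mem_range] at hj
      simp only [mul_apply, swap_apply_def]; constructor <;> split_ifs <;> omega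
  rw [if_neg h2]
  refine list_prod_map_apply_of_forall fun j hj => ?_
  rw [List.mem_range] at hj
  simp only [mul_apply, swap_apply_def]; split_ifs <;> omega

theorem t3_apply_s5 {n : ℕ} (hn : 4 ≤ n) (x : ℕ) : t3 n x =
    if x = 1 then 3 else if x = 3 then 1 else if x = 2 then 4 else if x = 4 then 2
    else if x = n + 1 then n + 3 else if x = n + 3 then n + 1
    else if x = n + 2 then n + 4 else if x = n + 4 then n + 2 else x := by
  simp only [t3, mul_apply]
  split_ifs <;> subst_vars <;> simp (disch := omega) [swap_apply_of_ne_of_ne]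

theorem t4_apply_s5 {n : ℕ} (hn : 2 ≤ n) (x : ℕ) : t4 n x =
    if x = 1 then 2 else if x = 2 then 1 else if x = n + 1 then n + 2 else if x = n + 2 then n + 1
    else if 3 ≤ x ∧ x ≤ n then x + n else if n + 3 ≤ x ∧ x ≤ 2 * n then x - n else x := by
  have hflip : ((List.range (n - 2)).map fun j => swap (2 + (j + 1)) (n + 2 + (j + 1))).prod x =
      if 3 ≤ x ∧ x ≤ n then x + n else if n + 3 ≤ x ∧ x ≤ 2 * n then x - n else x := by
    by_cases h1 : 3 ≤ x ∧ x ≤ n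
    · rw [if_pos h1]
      refine list_prod_map_apply_of_mem List.nodup_range (i := x - 3)
        (List.mem_range.mpr (by omega)) ?_ fun j hj hji => ?_
      · rw [swap_apply_def]; split_ifs <;> omega
      · rw [List.mem_range] at hj
        simp only [swap_apply_def]; constructor <;> split_ifs <;> omega
    rw [if_neg h1]
    by_cases h2 : n + 3 ≤ x ∧ x ≤ 2 * n
    · rw [if_pos h2]
      refine list_prod_map_apply_of_mem List.nodup_range (i := x - n - 3)
        (List.mem_range.mpr (by omega)) ?_ fun j hj hji => ?_
      · rw [swap_apply_def]; split_ifs <;> omega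
      · rw [List.mem_range] at hj
        simp only [swap_apply_def]; constructor <;> split_ifs <;> omega
    rw [if_neg h2]
    refine list_prod_map_apply_of_forall fun j hj => ?_
    rw [List.mem_range] at hj
    rw [swap_apply_def]; split_ifs <;> omega
  rw [t4, mul_apply, mul_apply, hflip]
  simp only [swap_apply_def]
  split_ifs <;> omega

namespace G234

/-- `-1` exactly on the head columns `2, 4, 5`: the head action below is `(σ c, e s)` conjugated
by exchanging the two sides of these columns. -/
def twist (i : Fin 5) : ℤˣ := if i = 1 ∨ i = 3 ∨ i = 4 then -1 else 1

inductive Point (k : ℕ)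
  | head (i : Fin 5) (s : ℤˣ)
  | tail (j : Fin k) (b s : ℤˣ)

variable {k : ℕ}

instance : SMul (ℤˣ × Perm (Fin 5)) (Point k) where
  smul g
    | .head i s => .head (g.2 i) (g.1 * twist i * twist (g.2 i) * s)
    | .tail j b s => .tail j (g.1 * sign g.2 * b) (g.1 * s)

@[simp] lemma smul_head (g : ℤˣ × Perm (Fin 5)) (i : Fin 5) (s : ℤˣ) :
    g • (.head i s : Point k) = .head (g.2 i) (g.1 * twist i * twist (g.2 i) * s) := rfl

@[simp] lemma smul_tail (g : ℤˣ × Perm (Fin 5)) (j : Fin k) (b s : ℤˣ) :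
    g • (.tail j b s : Point k) = .tail j (g.1 * sign g.2 * b) (g.1 * s) := rfl

instance : MulAction (ℤˣ × Perm (Fin 5)) (Point k) where
  one_smul := by rintro (⟨i, s⟩ | ⟨j, b, s⟩) <;> simp [Int.units_mul_self]
  mul_smul g h := by
    rintro (⟨i, s⟩ | ⟨j, b, s⟩)
    · simp only [smul_head, Prod.fst_mul, Prod.snd_mul, mul_apply, Point.head.injEq, true_and]
      calc _ = g.1 * h.1 * twist i * twist (g.2 (h.2 i)) * s * (twist (h.2 i) * twist (h.2 i)) := by
            rw [Int.units_mul_self, mul_one]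
        _ = _ := by ac_rfl
    · simp only [smul_tail, Prod.fst_mul, Prod.snd_mul, map_mul, Point.tail.injEq, true_and]
      constructor <;> ac_rfl

instance : FaithfulSMul (ℤˣ × Perm (Fin 5)) (Point k) where
  eq_of_smul_eq_smul {g h} hgh := by
    have hi (i : Fin 5) := hgh (.head i 1)
    simp only [smul_head, Point.head.injEq, mul_one] at hi
    refine Prod.ext ?_ (Equiv.ext fun i => (hi i).1)
    have := (hi 0).2
    rwa [(hi 0).1, mul_left_inj, mul_left_inj] at this

def offset (m : ℕ) (s : ℤˣ) : ℕ := if s = 1 then 0 else m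

@[simp] lemma offset_one (m : ℕ) : offset m 1 = 0 := if_pos rfl

@[simp] lemma offset_neg_one (m : ℕ) : offset m (-1) = m := if_neg (by decide)

def embed (k : ℕ) : Point k ↪ ℕ where
  toFun
    | .head i s => i + 1 + offset (2 * k + 5) s
    | .tail j b s => 2 * j + 6 + offset 1 b + offset (2 * k + 5) s
  inj' := by
    rintro (⟨i, s⟩ | ⟨j, b, s⟩) (⟨i', s'⟩ | ⟨j', b', s'⟩) h
    · obtain rfl | rfl := Int.units_eq_one_or s <;> obtain rfl | rfl := Int.units_eq_one_or s' <;>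
        simp at h ⊢ <;> omega
    · obtain rfl | rfl := Int.units_eq_one_or s <;> obtain rfl | rfl := Int.units_eq_one_or s' <;>
        obtain rfl | rfl := Int.units_eq_one_or b' <;> simp at h ⊢ <;> omega
    · obtain rfl | rfl := Int.units_eq_one_or s <;> obtain rfl | rfl := Int.units_eq_one_or s' <;>
        obtain rfl | rfl := Int.units_eq_one_or b <;> simp at h ⊢ <;> omega
    · obtain rfl | rfl := Int.units_eq_one_or s <;> obtain rfl | rfl := Int.units_eq_one_or s' <;>
        obtain rfl | rfl := Int.units_eq_one_or b <;> obtain rfl | rfl := Int.units_eq_one_or b' <;>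
        simp at h ⊢ <;> omega

@[simp] lemma embed_head (i : Fin 5) (s : ℤˣ) :
    embed k (.head i s) = i + 1 + offset (2 * k + 5) s :=
  rfl

@[simp] lemma embed_tail (j : Fin k) (b s : ℤˣ) :
    embed k (.tail j b s) = 2 * j + 6 + offset 1 b + offset (2 * k + 5) s :=
  rfl

lemma mem_range_embed {x : ℕ} (h1 : 1 ≤ x) (h2 : x ≤ 4 * k + 10) : x ∈ Set.range (embed k) := by
  have parity (y : ℕ) : ∃ b : ℤˣ, offset 1 b = y % 2 :=
    ⟨if y % 2 = 0 then 1 else -1, by split_ifs <;> simp <;> omega⟩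
  obtain hx | hx | hx | hx : x ≤ 5 ∨ 6 ≤ x ∧ x ≤ 2 * k + 5 ∨ 2 * k + 6 ≤ x ∧ x ≤ 2 * k + 10 ∨
      2 * k + 10 < x := by omega
  · exact ⟨.head ⟨x - 1, by omega⟩ 1, by simp; omega⟩
  · obtain ⟨b, hb⟩ := parity x
    exact ⟨.tail ⟨(x - 6) / 2, by omega⟩ b 1, by simp [hb]; omega⟩
  · exact ⟨.head ⟨x - (2 * k + 6), by omega⟩ (-1), by simp; omega⟩
  · obtain ⟨b, hb⟩ := parity (x - (2 * k + 5))
    exact ⟨.tail ⟨(x - (2 * k + 11)) / 2, by omega⟩ b (-1), by simp [hb]; omega⟩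

noncomputable def rep (k : ℕ) : ℤˣ × Perm (Fin 5) →* Perm ℕ :=
  (viaEmbeddingHom (embed k)).comp (MulAction.toPermHom _ _)

lemma rep_injective : Function.Injective (rep k) :=
  (viaEmbeddingHom_injective _).comp MulAction.toPerm_injective

lemma eq_rep {f : Perm ℕ} {g : ℤˣ × Perm (Fin 5)} (h : ∀ p, f (embed k p) = embed k (g • p))
    (hfix : ∀ x, x = 0 ∨ 4 * k + 10 < x → f x = x) : f = rep k g :=
  eq_viaEmbedding_of_forall h fun x hx => hfix x <| by
    by_contra! hx'
    exact hx (mem_range_embed (by omega) hx'.2)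

lemma t2_eq_rep : t2 (2 * k + 5) = rep k (1, swap 3 4) := by
  refine eq_rep (fun p => ?_) (fun x hx => ?_)
  · rcases p with ⟨i, s⟩ | ⟨j, b, s⟩
    · fin_cases i <;> obtain rfl | rfl := Int.units_eq_one_or s <;>
        simp [twist, t2_apply, swap_apply_def] <;> (try split_ifs) <;> omega
    · obtain rfl | rfl := Int.units_eq_one_or s <;> obtain rfl | rfl := Int.units_eq_one_or b <;>
        simp [t2_apply] <;> (try split_ifs) <;> omega
  · rw [t2_apply]; split_ifs <;> omega

lemma t3_eq_rep : t3 (2 * k + 5) = rep k (1, swap 0 2 * swap 1 3) := by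
  refine eq_rep (fun p => ?_) (fun x hx => ?_)
  · rcases p with ⟨i, s⟩ | ⟨j, b, s⟩
    · fin_cases i <;> obtain rfl | rfl := Int.units_eq_one_or s <;>
        simp [t3_apply_s5, twist, swap_apply_def] <;> (try split_ifs) <;> omega
    · obtain rfl | rfl := Int.units_eq_one_or s <;> obtain rfl | rfl := Int.units_eq_one_or b <;>
        simp [t3_apply_s5] <;> (try split_ifs) <;> omega
  · rw [t3_apply_s5 (by omega)]; split_ifs <;> omega

lemma t4_eq_rep : t4 (2 * k + 5) = rep k (-1, swap 0 1) := by
  refine eq_rep (fun p => ?_) (fun x hx => ?_)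
  · rcases p with ⟨i, s⟩ | ⟨j, b, s⟩
    · fin_cases i <;> obtain rfl | rfl := Int.units_eq_one_or s <;>
        simp [twist, t4_apply_s5, swap_apply_def] <;> (try split_ifs) <;> omega
    · obtain rfl | rfl := Int.units_eq_one_or s <;> obtain rfl | rfl := Int.units_eq_one_or b <;>
        simp [t4_apply_s5] <;> (try split_ifs) <;> omega
  · rw [t4_apply_s5 (by omega)]; split_ifs <;> omega

def generators : Set (ℤˣ × Perm (Fin 5)) :=
  {(1, swap 3 4), (1, swap 0 2 * swap 1 3), (-1, swap 0 1)}

lemma closure_generators : Subgroup.closure generators = ⊤ := by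
  set H := Subgroup.closure generators
  have ha : ((-1 : ℤˣ), swap (0 : Fin 5) 1) ∈ H := Subgroup.subset_closure (by simp [generators])
  have hb : ((1 : ℤˣ), swap (3 : Fin 5) 4) ∈ H := Subgroup.subset_closure (by simp [generators])
  have hc : ((1 : ℤˣ), swap (0 : Fin 5) 2 * swap 1 3) ∈ H :=
    Subgroup.subset_closure (by simp [generators])
  set g := ((-1 : ℤˣ), swap (0 : Fin 5) 1) * (1, swap 3 4) * (1, swap 0 2 * swap 1 3)
  have hinr : (MonoidHom.inr ℤˣ (Perm (Fin 5))).range ≤ H := by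
    have : Fact (Nat.Prime 5) := ⟨Nat.prime_five⟩
    have hprime : (Fintype.card (Fin 5)).Prime := Fintype.card_fin 5 ▸ Nat.prime_five
    have hcycle : (g ^ 2).2.IsCycle := isCycle_of_prime_order'' hprime <| by
      rw [Fintype.card_fin]
      exact orderOf_eq_prime (by set_option maxRecDepth 2000 in decide) (by decide)
    rw [MonoidHom.range_eq_map, ← closure_prime_cycle_swap hprime hcycle (by decide)
      ⟨3, 4, by decide, rfl⟩, MonoidHom.map_closure, Subgroup.closure_le, Set.image_pair,
      Set.pair_subset_iff]
    refine ⟨?_, hb⟩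
    rw [show MonoidHom.inr ℤˣ (Perm (Fin 5)) (g ^ 2).2 = g ^ 2 from Prod.ext (by decide) rfl]
    exact pow_mem (mul_mem (mul_mem ha hb) hc) 2
  rw [eq_top_iff]
  rintro ⟨e, σ⟩ -
  rw [show ((e, σ) : ℤˣ × Perm (Fin 5)) = (e, 1) * MonoidHom.inr _ _ σ by simp]
  refine mul_mem ?_ (hinr ⟨σ, rfl⟩)
  obtain rfl | rfl := Int.units_eq_one_or e
  · exact one_mem H
  · rw [show (((-1 : ℤˣ), 1) : ℤˣ × Perm (Fin 5)) =
      ((-1 : ℤˣ), swap (0 : Fin 5) 1) * MonoidHom.inr _ _ (swap 0 1) by simp]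
    exact mul_mem ha (hinr ⟨_, rfl⟩)

lemma range_rep :
    (rep k).range = Subgroup.closure {t2 (2 * k + 5), t3 (2 * k + 5), t4 (2 * k + 5)} := by
  rw [MonoidHom.range_eq_map, ← closure_generators, MonoidHom.map_closure, generators,
    Set.image_insert_eq, Set.image_insert_eq, Set.image_singleton, t2_eq_rep, t3_eq_rep, t4_eq_rep]

end G234

/-- For odd `n ≥ 5`, `G₂₃₄ = ⟨t₂, t₃, t₄⟩` is isomorphic to `ℤ₂ × Sym(5)`. -/
theorem G234_iso (n : ℕ) (hn : 5 ≤ n) (hodd : Odd n) :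
    Nonempty ((Subgroup.closure {t2 n, t3 n, t4 n} : Subgroup (Equiv.Perm ℕ)) ≃*
      (Multiplicative (ZMod 2) × Equiv.Perm (Fin 5))) := by
  obtain ⟨k, rfl⟩ : ∃ k, n = 2 * k + 5 := by
    obtain ⟨m, rfl⟩ := hodd
    exact ⟨m - 2, by omega⟩
  have unitsEquiv : ℤˣ ≃* Multiplicative (ZMod 2) :=
    mulEquivOfPrimeCardEq (p := 2) (by simp) (by simp)
  exact ⟨(MulEquiv.subgroupCongr G234.range_rep.symm).trans <|
    (MonoidHom.ofInjective G234.rep_injective).symm.trans <|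
    MulEquiv.prodCongr unitsEquiv (MulEquiv.refl _)⟩
end

section
/- Let H be a group with presentation ⟨r₁,...,r_{n−1} | (rᵢrⱼ)^{mᵢⱼ}⟩ where mᵢᵢ = 1, mᵢⱼ = 3 if |i−j| = 1, and mᵢⱼ = 2 if |i−j| > 1. Then H is isomorphic to the symmetric group Sym(n). -/
/-! The adjacent transpositions satisfy the relations, so sending `rᵢ ↦ (i i+1)` defines a
surjection `H → Sym(n)`. Conversely, with `K ≤ H` the image of the analogous group on the
generators `r₂, …, r_{n−1}`, every element of `H` has the form `k · r₁ r₂ ⋯ r_j` with `k ∈ K`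
and `0 ≤ j ≤ n − 1`: this set contains `1` and, by the braid and commutation relations, is
closed under right multiplication by every generator. Hence `|H| ≤ n · |K|`, so `|H| ≤ n!` by
induction on `n`, and the surjection is a bijection. -/

/-- The Coxeter exponents for the standard presentation of `Sym(n)`:
`mᵢᵢ = 1`, `mᵢⱼ = 3` if `|i−j| = 1`, and `mᵢⱼ = 2` if `|i−j| > 1`. -/
def coxM (n : ℕ) (i j : Fin (n - 1)) : ℕ :=
  if i = j then 1 else if Nat.dist i.val j.val = 1 then 3 else 2

/-- The relators `(rᵢrⱼ)^{mᵢⱼ}` in the free group on `r₁, …, r_{n-1}`. -/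
def coxRels (n : ℕ) : Set (FreeGroup (Fin (n - 1))) :=
  {x | ∃ i j : Fin (n - 1), x = (FreeGroup.of i * FreeGroup.of j) ^ coxM n i j}

section Involutions

variable {M : Type*} [Group M] {x y : M}

lemma mul_pow_two_eq_one_iff_commute (hx : x * x = 1) (hy : y * y = 1) :
    (x * y) ^ 2 = 1 ↔ Commute x y := by
  rw [pow_two, mul_eq_one_iff_eq_inv, mul_inv_rev, inv_eq_of_mul_eq_one_right hx,
    inv_eq_of_mul_eq_one_right hy]
  rfl

lemma mul_pow_three_eq_one_iff_braid (hx : x * x = 1) (hy : y * y = 1) :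
    (x * y) ^ 3 = 1 ↔ x * y * x = y * x * y := by
  rw [show (x * y) ^ 3 = x * y * x * (y * x * y) by simp only [pow_succ, pow_zero, one_mul,
    mul_assoc], mul_eq_one_iff_eq_inv, mul_inv_rev, mul_inv_rev, inv_eq_of_mul_eq_one_right hx,
    inv_eq_of_mul_eq_one_right hy, mul_assoc, mul_assoc y]

end Involutions

lemma Equiv.swap_braid {α : Type*} [DecidableEq α] {x y z : α} (hxy : x ≠ y) (hxz : x ≠ z)
    (hyz : y ≠ z) :
    swap x y * swap y z * swap x y = swap y z * swap x y * swap y z := by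
  rw [swap_mul_swap_mul_swap hxy hxz, swap_comm x y, swap_comm y z,
    swap_mul_swap_mul_swap hyz.symm hxz.symm, swap_comm]

namespace SymmetricGroupPresentation

abbrev G (n : ℕ) := PresentedGroup (coxRels n)

variable {n : ℕ}

lemma lift_eq_one_of_mem_coxRels {H : Type*} [Group H] (t : Fin (n - 1) → H)
    (sq : ∀ i, t i * t i = 1)
    (braid : ∀ i j : Fin (n - 1), i.val + 1 = j.val → t i * t j * t i = t j * t i * t j)
    (comm : ∀ i j : Fin (n - 1), i.val + 2 ≤ j.val → Commute (t i) (t j)) :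
    ∀ r ∈ coxRels n, FreeGroup.lift t r = 1 := by
  rintro _ ⟨i, j, rfl⟩
  rw [map_pow, map_mul, FreeGroup.lift_apply_of, FreeGroup.lift_apply_of, coxM]
  have hne : i ≠ j → i.val ≠ j.val := fun h h' => h (Fin.ext h')
  split_ifs with hij hdist
  · rw [hij, pow_one, sq]
  · rw [mul_pow_three_eq_one_iff_braid (sq i) (sq j)]
    obtain h | h : i.val + 1 = j.val ∨ j.val + 1 = i.val := by
      have := hne hij; simp only [Nat.dist] at hdist; omega
    · exact braid i j h
    · exact (braid j i h).symm
  · rw [mul_pow_two_eq_one_iff_commute (sq i) (sq j)]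
    obtain h | h : i.val + 2 ≤ j.val ∨ j.val + 2 ≤ i.val := by
      have := hne hij; simp only [Nat.dist] at hdist; omega
    · exact comm i j h
    · exact (comm j i h).symm

/-- `s n a` is the generator `r_{a+1}`, with the junk value `1` for `a ≥ n - 1`; the junk value
lets the relations be stated without side conditions wherever they remain true. -/
noncomputable def s (n a : ℕ) : G n :=
  if h : a < n - 1 then PresentedGroup.of ⟨a, h⟩ else 1

lemma s_of_lt {a : ℕ} (h : a < n - 1) : s n a = PresentedGroup.of ⟨a, h⟩ := dif_pos h

lemma s_of_le {a : ℕ} (h : n - 1 ≤ a) : s n a = 1 := dif_neg (by omega)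

lemma s_mul_s_pow_coxM (i j : Fin (n - 1)) : (s n i * s n j) ^ coxM n i j = 1 := by
  rw [s_of_lt i.isLt, s_of_lt j.isLt]
  exact PresentedGroup.one_of_mem ⟨i, j, rfl⟩

lemma s_mul_self (a : ℕ) : s n a * s n a = 1 := by
  by_cases h : a < n - 1
  · simpa [coxM] using s_mul_s_pow_coxM (n := n) ⟨a, h⟩ ⟨a, h⟩
  · rw [s_of_le (by omega), mul_one]

lemma s_commute {a b : ℕ} (h : a + 2 ≤ b) : Commute (s n a) (s n b) := by
  by_cases hb : b < n - 1
  · have := s_mul_s_pow_coxM (n := n) ⟨a, by omega⟩ ⟨b, hb⟩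
    rw [coxM, if_neg (by simp [Fin.ext_iff]; omega), if_neg (by simp [Nat.dist]; omega)] at this
    exact (mul_pow_two_eq_one_iff_commute (s_mul_self a) (s_mul_self b)).1 this
  · rw [s_of_le (a := b) (by omega)]
    exact Commute.one_right _

lemma s_braid {a : ℕ} (h : a + 1 < n - 1) :
    s n a * s n (a + 1) * s n a = s n (a + 1) * s n a * s n (a + 1) := by
  have := s_mul_s_pow_coxM (n := n) ⟨a, by omega⟩ ⟨a + 1, h⟩
  rw [coxM, if_neg (by simp [Fin.ext_iff]), if_pos (by simp [Nat.dist])] at this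
  exact (mul_pow_three_eq_one_iff_braid (s_mul_self a) (s_mul_self (a + 1))).1 this

noncomputable def ascend (n : ℕ) : ℕ → G n
  | 0 => 1
  | j + 1 => ascend n j * s n j

lemma ascend_commute_s {j a : ℕ} (h : j + 1 ≤ a) : Commute (ascend n j) (s n a) := by
  induction j with
  | zero => exact Commute.one_left _
  | succ j ih => exact (ih (by omega)).mul_left (s_commute (by omega))

lemma ascend_mul_s_of_add_one_lt {j a : ℕ} (hj : j ≤ n - 1) (h : a + 1 < j) :
    ascend n j * s n a = s n (a + 1) * ascend n j := by
  induction j with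
  | zero => omega
  | succ j ih =>
    obtain h | rfl := Nat.lt_or_eq_of_le (Nat.le_of_lt_succ h)
    · rw [ascend, mul_assoc, ← (s_commute (by omega)).eq, ← mul_assoc, ih (by omega) h,
        mul_assoc]
    · calc ascend n (a + 1 + 1) * s n a
          = ascend n a * (s n a * s n (a + 1) * s n a) := by simp only [ascend, mul_assoc]
        _ = ascend n a * s n (a + 1) * (s n a * s n (a + 1)) := by
          rw [s_braid (by omega)]; simp only [mul_assoc]
        _ = s n (a + 1) * ascend n (a + 1 + 1) := by
          rw [(ascend_commute_s le_rfl).eq]; simp only [ascend, mul_assoc]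

noncomputable def shift (n : ℕ) : G n →* G (n + 1) :=
  PresentedGroup.toGroup (f := fun i => s (n + 1) (i.val + 1)) <|
    lift_eq_one_of_mem_coxRels _ (fun _ => s_mul_self _)
      (fun i j h => by rw [← h]; exact s_braid (by omega))
      (fun _ _ h => s_commute (by omega))

lemma s_succ_mem_range_shift (a : ℕ) : s (n + 1) (a + 1) ∈ (shift n).range := by
  by_cases h : a < n - 1
  · refine ⟨s n a, ?_⟩
    rw [s_of_lt h, shift, PresentedGroup.toGroup.of]
  · rw [s_of_le (by omega)]
    exact one_mem _

lemma exists_shift_mul_ascend_mul_s {g : G n} {j : ℕ} (hj : j ≤ n) (a : ℕ) :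
    ∃ g' : G n, ∃ j' ≤ n,
      shift n g * ascend (n + 1) j * s (n + 1) a = shift n g' * ascend (n + 1) j' := by
  obtain h | rfl | rfl | h : j + 1 ≤ a ∨ a = j ∨ a + 1 = j ∨ a + 1 < j := by omega
  · obtain ⟨a, rfl⟩ : ∃ a', a = a' + 1 := ⟨a - 1, by omega⟩
    obtain ⟨k, hk⟩ := s_succ_mem_range_shift (n := n) a
    refine ⟨g * k, j, hj, ?_⟩
    rw [mul_assoc, (ascend_commute_s h).eq, map_mul, hk, mul_assoc]
  · by_cases ha : a < n
    · exact ⟨g, a + 1, ha, by rw [ascend, mul_assoc]⟩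
    · exact ⟨g, a, hj, by rw [s_of_le (by omega), mul_one]⟩
  · exact ⟨g, a, by omega, by rw [ascend, mul_assoc, mul_assoc, s_mul_self, mul_one]⟩
  · obtain ⟨k, hk⟩ := s_succ_mem_range_shift (n := n) a
    refine ⟨g * k, j, hj, ?_⟩
    rw [mul_assoc, ascend_mul_s_of_add_one_lt (by omega) h, map_mul, hk, mul_assoc]

lemma surjective_shift_mul_ascend :
    Function.Surjective fun p : G n × Fin (n + 1) => shift n p.1 * ascend (n + 1) p.2 := by
  suffices ∀ x : G (n + 1), ∃ g : G n, ∃ j ≤ n, x = shift n g * ascend (n + 1) j by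
    intro x
    obtain ⟨g, j, hj, rfl⟩ := this x
    exact ⟨(g, ⟨j, by omega⟩), rfl⟩
  intro x
  have hx : x ∈ Subgroup.closure (Set.range PresentedGroup.of) := by
    rw [PresentedGroup.closure_range_of]; trivial
  have hof (i : Fin n) : PresentedGroup.of (rels := coxRels (n + 1)) i = s (n + 1) i :=
    (s_of_lt i.isLt).symm
  induction hx using Subgroup.closure_induction_right with
  | one => exact ⟨1, 0, by omega, by rw [map_one, ascend, mul_one]⟩
  | mul_right y _ _ hy ih =>
    obtain ⟨i, hi⟩ := hy
    obtain ⟨g, j, hj, rfl⟩ := ih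
    rw [← hi, hof]
    exact exists_shift_mul_ascend_mul_s hj _
  | mul_inv_cancel y _ _ hy ih =>
    obtain ⟨i, hi⟩ := hy
    obtain ⟨g, j, hj, rfl⟩ := ih
    rw [← hi, hof, inv_eq_of_mul_eq_one_right (s_mul_self _)]
    exact exists_shift_mul_ascend_mul_s hj _

instance : Subsingleton (G 0) :=
  have : IsEmpty (Fin (0 - 1)) := inferInstanceAs (IsEmpty (Fin 0))
  (PresentedGroup.mk_surjective _).subsingleton

instance finite : ∀ n, Finite (G n)
  | 0 => inferInstance
  | n + 1 => have := finite n; .of_surjective _ surjective_shift_mul_ascend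

lemma card_le_factorial : ∀ n, Nat.card (G n) ≤ n.factorial
  | 0 => Finite.card_le_one_iff_subsingleton.2 inferInstance
  | n + 1 =>
    calc Nat.card (G (n + 1))
        ≤ Nat.card (G n × Fin (n + 1)) :=
          Nat.card_le_card_of_surjective _ surjective_shift_mul_ascend
      _ = Nat.card (G n) * (n + 1) := by rw [Nat.card_prod, Nat.card_fin]
      _ ≤ n.factorial * (n + 1) := Nat.mul_le_mul_right _ (card_le_factorial n)
      _ = (n + 1).factorial := by rw [Nat.factorial_succ, mul_comm]

def adjSwap (n : ℕ) (i : Fin (n - 1)) : Equiv.Perm (Fin n) :=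
  Equiv.swap ⟨i, by omega⟩ ⟨i + 1, by omega⟩

noncomputable def toPerm (n : ℕ) : G n →* Equiv.Perm (Fin n) :=
  PresentedGroup.toGroup (f := adjSwap n) <|
    lift_eq_one_of_mem_coxRels _ (fun _ => Equiv.swap_mul_self _ _)
      (fun i j h => by
        simp only [adjSwap, ← h]
        exact Equiv.swap_braid (by simp) (by simp [Fin.ext_iff]; omega) (by simp))
      (fun i j h => (Equiv.Perm.disjoint_swap_swap (by simp [Fin.ext_iff]; omega)).commute)

lemma toPerm_surjective : Function.Surjective (toPerm n) := by
  cases n with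
  | zero => exact fun σ => ⟨1, Subsingleton.elim _ _⟩
  | succ n =>
    intro σ
    have hσ : σ ∈ Submonoid.closure (Set.range fun i : Fin n ↦ Equiv.swap i.castSucc i.succ) := by
      rw [Equiv.Perm.mclosure_swap_castSucc_succ]; trivial
    refine Submonoid.closure_le (S := (toPerm (n + 1)).range.toSubmonoid).2 ?_ hσ
    rintro _ ⟨i, rfl⟩
    exact ⟨.of i, PresentedGroup.toGroup.of _⟩

end SymmetricGroupPresentation

open SymmetricGroupPresentation

/-- A group with presentation
`⟨r₁,…,r_{n−1} ∣ (rᵢrⱼ)^{mᵢⱼ}⟩`, where `mᵢᵢ = 1`, `mᵢⱼ = 3` for `|i−j| = 1`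
and `mᵢⱼ = 2` for `|i−j| > 1`, is isomorphic to the symmetric group `Sym(n)`. -/
theorem presentedGroup_iso_symmetricGroup (n : ℕ) :
    Nonempty (PresentedGroup (coxRels n) ≃* Equiv.Perm (Fin n)) := by
  have hsurj : Function.Surjective (toPerm n) := toPerm_surjective
  have hcard : Nat.card (G n) = Nat.card (Equiv.Perm (Fin n)) :=
    le_antisymm (by rw [Nat.card_perm, Nat.card_fin]; exact card_le_factorial n)
      (Nat.card_le_card_of_surjective _ hsurj)
  exact ⟨.ofBijective (toPerm n) ((Nat.bijective_iff_surjective_and_card _).2 ⟨hsurj, hcard⟩)⟩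
end

section
/- Let G = ⟨t₁,...,tₙ⟩ be a group generated by involutions tᵢ such that (tᵢtⱼ)² = 1 whenever |i−j| ≥ 2. For J ⊆ {1,...,n} write G_J = ⟨tⱼ : j ∈ J⟩. Suppose {t₁,...,t_{n−1}} is a C-string for ⟨t₁,...,t_{n−1}⟩, {t₂,...,tₙ} is a C-string for ⟨t₂,...,tₙ⟩, and ⟨t₁,...,t_{n−1}⟩ ∩ ⟨t₂,...,tₙ⟩ = ⟨t₂,...,t_{n−1}⟩. Then {t₁,...,tₙ} is a C-string for G, i.e., G_J ∩ G_K = G_{J∩K} for all J, K ⊆ {1,...,n}. -/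
/-- The subgroup generated by the generators indexed by `J`. -/
def GJ {G : Type*} [Group G] (t : ℕ → G) (J : Set ℕ) : Subgroup G :=
  Subgroup.closure (t '' J)

/-- A family of involutions `t₁, …, tₙ` (indexed by `Set.Icc 1 n`) generating
`H` is a C-string if the intersection property `G_J ⊓ G_K = G_{J ∩ K}` holds
for all `J, K ⊆ {1, …, n}`. -/
def IsCString {G : Type*} [Group G] (n : ℕ) (t : ℕ → G) : Prop :=
  ∀ J K : Set ℕ, J ⊆ Set.Icc 1 n → K ⊆ Set.Icc 1 n →
    GJ t J ⊓ GJ t K = GJ t (J ∩ K)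

private lemma GJ_mono {G : Type*} [Group G] (t : ℕ → G) {J K : Set ℕ} (h : J ⊆ K) :
    GJ t J ≤ GJ t K :=
  Subgroup.closure_mono (Set.image_mono h)

private lemma GJ_empty {G : Type*} [Group G] (t : ℕ → G) : GJ t (∅ : Set ℕ) = ⊥ := by
  simp [GJ]

private lemma GJ_commute {G : Type*} [Group G] {n : ℕ} {t : ℕ → G}
    (hinv : ∀ i ∈ Set.Icc 1 n, orderOf (t i) = 2)
    (hcomm : ∀ i ∈ Set.Icc 1 n, ∀ j ∈ Set.Icc 1 n,
      2 ≤ Nat.dist i j → (t i * t j) ^ 2 = 1)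
    {A B : Set ℕ} (hA : A ⊆ Set.Icc 1 n) (hB : B ⊆ Set.Icc 1 n)
    (hsep : ∀ a ∈ A, ∀ b ∈ B, 2 ≤ Nat.dist a b) :
    ∀ x ∈ GJ t A, ∀ y ∈ GJ t B, Commute x y := by
  have hgen : ∀ x ∈ t '' A, ∀ y ∈ t '' B, x * y = y * x := by
    rintro _ ⟨a, ha, rfl⟩ _ ⟨b, hb, rfl⟩
    have h2 : t a * t b * (t a * t b) = 1 := by
      have h := hcomm a (hA ha) b (hB hb) (hsep a ha b hb); rwa [sq] at h
    have ha2 : t a * t a = 1 := by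
      have h := pow_orderOf_eq_one (t a); rw [hinv a (hA ha), sq] at h; exact h
    have hb2 : t b * t b = 1 := by
      have h := pow_orderOf_eq_one (t b); rw [hinv b (hB hb), sq] at h; exact h
    have hai : (t a)⁻¹ = t a := inv_eq_of_mul_eq_one_right ha2
    have hbi : (t b)⁻¹ = t b := inv_eq_of_mul_eq_one_right hb2
    have hinv2 : (t a * t b)⁻¹ = t a * t b := inv_eq_of_mul_eq_one_right h2
    rw [← hinv2, mul_inv_rev, hai, hbi]
  have step1 : GJ t B ≤ Subgroup.centralizer (t '' A) := by
    rw [GJ, Subgroup.closure_le]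
    intro y hy
    exact Subgroup.mem_centralizer_iff.mpr fun g hg => hgen g hg y hy
  have step2 : GJ t A ≤ Subgroup.centralizer ((GJ t B : Subgroup G) : Set G) := by
    rw [GJ, Subgroup.closure_le]
    intro x hx
    exact Subgroup.mem_centralizer_iff.mpr fun y hy =>
      (Subgroup.mem_centralizer_iff.mp (step1 hy) x hx).symm
  intro x hx y hy
  exact (Subgroup.mem_centralizer_iff.mp (step2 hx) y hy).symm

private lemma GJ_decomp {G : Type*} [Group G] {n : ℕ} {t : ℕ → G}
    (hinv : ∀ i ∈ Set.Icc 1 n, orderOf (t i) = 2)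
    (hcomm : ∀ i ∈ Set.Icc 1 n, ∀ j ∈ Set.Icc 1 n,
      2 ≤ Nat.dist i j → (t i * t j) ^ 2 = 1)
    {A B : Set ℕ} (hA : A ⊆ Set.Icc 1 n) (hB : B ⊆ Set.Icc 1 n)
    (hsep : ∀ a ∈ A, ∀ b ∈ B, 2 ≤ Nat.dist a b) :
    ∀ x ∈ GJ t (A ∪ B), ∃ a ∈ GJ t A, ∃ b ∈ GJ t B, x = a * b := by
  have hc := GJ_commute hinv hcomm hA hB hsep
  intro x hx
  rw [GJ, Set.image_union] at hx
  induction hx using Subgroup.closure_induction with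
  | mem g hg =>
    rcases hg with hg | hg
    · exact ⟨g, Subgroup.subset_closure hg, 1, one_mem _, (mul_one g).symm⟩
    · exact ⟨1, one_mem _, g, Subgroup.subset_closure hg, (one_mul g).symm⟩
  | one => exact ⟨1, one_mem _, 1, one_mem _, (one_mul 1).symm⟩
  | mul x y hx hy ihx ihy =>
    obtain ⟨a, ha, b, hb, rfl⟩ := ihx
    obtain ⟨a', ha', b', hb', rfl⟩ := ihy
    refine ⟨a * a', mul_mem ha ha', b * b', mul_mem hb hb', ?_⟩
    have hcomm' : b * a' = a' * b := ((hc a' ha' b hb).eq).symm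
    calc a * b * (a' * b') = a * (b * a') * b' := by group
      _ = a * (a' * b) * b' := by rw [hcomm']
      _ = a * a' * (b * b') := by group
  | inv x hx ihx =>
    obtain ⟨a, ha, b, hb, rfl⟩ := ihx
    refine ⟨a⁻¹, inv_mem ha, b⁻¹, inv_mem hb, ?_⟩
    rw [mul_inv_rev, ((hc a ha b hb).inv_inv.eq).symm]

/-- Let `G = ⟨t₁,…,tₙ⟩` with each `tᵢ` an involution and `(tᵢtⱼ)² = 1`
whenever `|i−j| ≥ 2`.  If `{t₁,…,t_{n−1}}` and `{t₂,…,tₙ}` are C-strings for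
the subgroups they generate and
`⟨t₁,…,t_{n−1}⟩ ∩ ⟨t₂,…,tₙ⟩ = ⟨t₂,…,t_{n−1}⟩`, then `{t₁,…,tₙ}` is a
C-string for `G`. -/
theorem cstring_of_cstrings {G : Type*} [Group G] (n : ℕ) (t : ℕ → G)
    (hgen : Subgroup.closure (t '' Set.Icc 1 n) = ⊤)
    (hinv : ∀ i ∈ Set.Icc 1 n, orderOf (t i) = 2)
    (hcomm : ∀ i ∈ Set.Icc 1 n, ∀ j ∈ Set.Icc 1 n,
      2 ≤ Nat.dist i j → (t i * t j) ^ 2 = 1)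
    (hleft : ∀ J K : Set ℕ, J ⊆ Set.Icc 1 (n - 1) → K ⊆ Set.Icc 1 (n - 1) →
      GJ t J ⊓ GJ t K = GJ t (J ∩ K))
    (hright : ∀ J K : Set ℕ, J ⊆ Set.Icc 2 n → K ⊆ Set.Icc 2 n →
      GJ t J ⊓ GJ t K = GJ t (J ∩ K))
    (hint : GJ t (Set.Icc 1 (n - 1)) ⊓ GJ t (Set.Icc 2 n) =
      GJ t (Set.Icc 2 (n - 1))) :
    IsCString n t := by
  -- intersection of an initial and a final interval
  have helpInt : ∀ i j : ℕ, 1 ≤ i → i ≤ j → j ≤ n →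
      GJ t (Set.Icc 1 (j - 1)) ⊓ GJ t (Set.Icc (i + 1) n) =
        GJ t (Set.Icc (i + 1) (j - 1)) := by
    intro i j h1 hij hjn
    apply le_antisymm
    · intro x hx
      obtain ⟨hx1, hx2⟩ := Subgroup.mem_inf.mp hx
      have hM : x ∈ GJ t (Set.Icc 2 (n - 1)) := by
        rw [← hint]
        exact Subgroup.mem_inf.mpr
          ⟨GJ_mono t (Set.Icc_subset_Icc le_rfl (by omega)) hx1,
           GJ_mono t (Set.Icc_subset_Icc (by omega) le_rfl) hx2⟩
      have h3 : x ∈ GJ t (Set.Icc 1 (j - 1) ∩ Set.Icc 2 (n - 1)) := by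
        rw [← hleft (Set.Icc 1 (j - 1)) (Set.Icc 2 (n - 1)) (Set.Icc_subset_Icc le_rfl (by omega)) (Set.Icc_subset_Icc (by omega) le_rfl)]
        exact Subgroup.mem_inf.mpr ⟨hx1, hM⟩
      have hset1 : Set.Icc 1 (j - 1) ∩ Set.Icc 2 (n - 1) = Set.Icc 2 (j - 1) := by
        ext a; simp only [Set.mem_inter_iff, Set.mem_Icc]; omega
      rw [hset1] at h3
      have h4 : x ∈ GJ t (Set.Icc 2 (j - 1) ∩ Set.Icc (i + 1) n) := by
        rw [← hright (Set.Icc 2 (j - 1)) (Set.Icc (i + 1) n) (Set.Icc_subset_Icc le_rfl (by omega))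
          (Set.Icc_subset_Icc (by omega) le_rfl)]
        exact Subgroup.mem_inf.mpr ⟨h3, hx2⟩
      have hset2 : Set.Icc 2 (j - 1) ∩ Set.Icc (i + 1) n = Set.Icc (i + 1) (j - 1) := by
        ext a; simp only [Set.mem_inter_iff, Set.mem_Icc]; omega
      rwa [hset2] at h4
    · exact le_inf (GJ_mono t (Set.Icc_subset_Icc (by omega) le_rfl))
        (GJ_mono t (Set.Icc_subset_Icc le_rfl (by omega)))
  have hbot : ∀ i : ℕ, 1 ≤ i → i ≤ n →
      GJ t (Set.Icc 1 (i - 1)) ⊓ GJ t (Set.Icc (i + 1) n) = ⊥ := by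
    intro i h1 hn
    rw [helpInt i i h1 le_rfl hn]
    have : Set.Icc (i + 1) (i - 1) = (∅ : Set ℕ) := by
      ext a; simp only [Set.mem_Icc, Set.mem_empty_iff_false, iff_false]; omega
    rw [this, GJ_empty]
  -- decomposition of an element of `GJ t A` when `i ∉ A`
  have decomp : ∀ i ∈ Set.Icc 1 n, ∀ A ⊆ Set.Icc 1 n \ {i}, ∀ x ∈ GJ t A,
      ∃ a ∈ GJ t (A ∩ Set.Icc 1 (i - 1)), ∃ b ∈ GJ t (A ∩ Set.Icc (i + 1) n),
        x = a * b := by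
    intro i hi A hA x hx
    rw [Set.mem_Icc] at hi
    have hsplit : A = (A ∩ Set.Icc 1 (i - 1)) ∪ (A ∩ Set.Icc (i + 1) n) := by
      ext a
      constructor
      · intro ha
        have h' := hA ha
        rw [Set.mem_diff, Set.mem_Icc, Set.mem_singleton_iff] at h'
        rcases (by omega : (1 ≤ a ∧ a ≤ i - 1) ∨ (i + 1 ≤ a ∧ a ≤ n)) with h | h
        · exact Or.inl ⟨ha, Set.mem_Icc.mpr h⟩
        · exact Or.inr ⟨ha, Set.mem_Icc.mpr h⟩
      · rintro (⟨h, _⟩ | ⟨h, _⟩) <;> exact h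
    rw [hsplit] at hx
    refine GJ_decomp hinv hcomm ?_ ?_ ?_ x hx
    · exact fun a ha => (Set.mem_diff _).mp (hA ha.1) |>.1
    · exact fun a ha => (Set.mem_diff _).mp (hA ha.1) |>.1
    · intro a ha b hb
      rw [Set.mem_inter_iff, Set.mem_Icc] at ha hb
      have hab : a ≤ b := by omega
      rw [Nat.dist_eq_sub_of_le hab]; omega
  -- intersection property for subsets avoiding a common index
  have W : ∀ i ∈ Set.Icc 1 n, ∀ A B : Set ℕ, A ⊆ Set.Icc 1 n \ {i} →
      B ⊆ Set.Icc 1 n \ {i} → GJ t A ⊓ GJ t B = GJ t (A ∩ B) := by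
    intro i hi A B hA hB
    have hi' := Set.mem_Icc.mp hi
    apply le_antisymm
    · intro x hx
      obtain ⟨hxA, hxB⟩ := Subgroup.mem_inf.mp hx
      obtain ⟨a₁, ha₁, a₂, ha₂, hxa⟩ := decomp i hi A hA x hxA
      obtain ⟨b₁, hb₁, b₂, hb₂, hxb⟩ := decomp i hi B hB x hxB
      have heq : a₁ * a₂ = b₁ * b₂ := by rw [← hxa, ← hxb]
      have hg : b₁⁻¹ * a₁ = b₂ * a₂⁻¹ := by
        have ha₁' : a₁ = b₁ * b₂ * a₂⁻¹ := by rw [← heq]; group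
        rw [ha₁']; group
      have hgm : b₁⁻¹ * a₁ ∈ GJ t (Set.Icc 1 (i - 1)) ⊓ GJ t (Set.Icc (i + 1) n) := by
        refine Subgroup.mem_inf.mpr ⟨?_, ?_⟩
        · exact mul_mem (inv_mem (GJ_mono t Set.inter_subset_right hb₁))
            (GJ_mono t Set.inter_subset_right ha₁)
        · rw [hg]
          exact mul_mem (GJ_mono t Set.inter_subset_right hb₂)
            (inv_mem (GJ_mono t Set.inter_subset_right ha₂))
      rw [hbot i hi'.1 hi'.2] at hgm
      have h1 : b₁ = a₁ := inv_mul_eq_one.mp (Subgroup.mem_bot.mp hgm)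
      have h2 : b₂ = a₂ := by
        have : b₂ * a₂⁻¹ = 1 := by rw [← hg]; exact Subgroup.mem_bot.mp hgm
        exact mul_inv_eq_one.mp this
      have ha₁m : a₁ ∈ GJ t ((A ∩ Set.Icc 1 (i - 1)) ∩ (B ∩ Set.Icc 1 (i - 1))) := by
        rw [← hleft _ _ ?_ ?_]
        · exact Subgroup.mem_inf.mpr ⟨ha₁, h1 ▸ hb₁⟩
        · intro a ha
          rw [Set.mem_inter_iff, Set.mem_Icc] at ha
          rw [Set.mem_Icc]; omega
        · intro a ha
          rw [Set.mem_inter_iff, Set.mem_Icc] at ha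
          rw [Set.mem_Icc]; omega
      have ha₂m : a₂ ∈ GJ t ((A ∩ Set.Icc (i + 1) n) ∩ (B ∩ Set.Icc (i + 1) n)) := by
        rw [← hright _ _ ?_ ?_]
        · exact Subgroup.mem_inf.mpr ⟨ha₂, h2 ▸ hb₂⟩
        · intro a ha
          rw [Set.mem_inter_iff, Set.mem_Icc] at ha
          rw [Set.mem_Icc]; omega
        · intro a ha
          rw [Set.mem_inter_iff, Set.mem_Icc] at ha
          rw [Set.mem_Icc]; omega
      rw [hxa]
      have hs1 : (A ∩ Set.Icc 1 (i - 1)) ∩ (B ∩ Set.Icc 1 (i - 1)) ⊆ A ∩ B := by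
        rintro a ⟨⟨h1', _⟩, ⟨h2', _⟩⟩; exact ⟨h1', h2'⟩
      have hs2 : (A ∩ Set.Icc (i + 1) n) ∩ (B ∩ Set.Icc (i + 1) n) ⊆ A ∩ B := by
        rintro a ⟨⟨h1', _⟩, ⟨h2', _⟩⟩; exact ⟨h1', h2'⟩
      exact mul_mem (GJ_mono t hs1 ha₁m) (GJ_mono t hs2 ha₂m)
    · exact le_inf (GJ_mono t Set.inter_subset_left) (GJ_mono t Set.inter_subset_right)
  -- key: intersection of two one-index-removed subgroups
  have Q : ∀ i j : ℕ, 1 ≤ i → i < j → j ≤ n →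
      GJ t (Set.Icc 1 n \ {i}) ⊓ GJ t (Set.Icc 1 n \ {j}) ≤
        GJ t ((Set.Icc 1 n \ {i}) ∩ (Set.Icc 1 n \ {j})) := by
    intro i j h1 hij hjn x hx
    obtain ⟨hxi, hxj⟩ := Subgroup.mem_inf.mp hx
    have hiI : i ∈ Set.Icc 1 n := Set.mem_Icc.mpr ⟨h1, by omega⟩
    have hjI : j ∈ Set.Icc 1 n := Set.mem_Icc.mpr ⟨by omega, hjn⟩
    obtain ⟨a, ha, b, hb, hxab⟩ := decomp i hiI _ (fun s hs => hs) x hxi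
    obtain ⟨c, hc, d, hd, hxcd⟩ := decomp j hjI _ (fun s hs => hs) x hxj
    have ha' : a ∈ GJ t (Set.Icc 1 (i - 1)) := GJ_mono t Set.inter_subset_right ha
    have hb' : b ∈ GJ t (Set.Icc (i + 1) n) := GJ_mono t Set.inter_subset_right hb
    have hc' : c ∈ GJ t (Set.Icc 1 (j - 1)) := GJ_mono t Set.inter_subset_right hc
    have hd' : d ∈ GJ t (Set.Icc (j + 1) n) := GJ_mono t Set.inter_subset_right hd
    have heq : a * b = c * d := by rw [← hxab, ← hxcd]
    have hgdb : c⁻¹ * a = d * b⁻¹ := by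
      have ha2 : a = c * d * b⁻¹ := by rw [← heq]; group
      rw [ha2]; group
    have hg1 : c⁻¹ * a ∈ GJ t (Set.Icc 1 (j - 1)) :=
      mul_mem (inv_mem hc') (GJ_mono t (Set.Icc_subset_Icc le_rfl (by omega)) ha')
    have hg2 : c⁻¹ * a ∈ GJ t (Set.Icc (i + 1) n) := by
      rw [hgdb]
      exact mul_mem (GJ_mono t (Set.Icc_subset_Icc (by omega) le_rfl) hd') (inv_mem hb')
    have hg : c⁻¹ * a ∈ GJ t (Set.Icc (i + 1) (j - 1)) := by
      rw [← helpInt i j h1 (le_of_lt hij) hjn]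
      exact Subgroup.mem_inf.mpr ⟨hg1, hg2⟩
    have hceq : c = a * (c⁻¹ * a)⁻¹ := by group
    have hxfin : x = a * (c⁻¹ * a)⁻¹ * d := by rw [hxcd, ← hceq]
    rw [hxfin]
    have hsub1 : Set.Icc 1 (i - 1) ⊆ (Set.Icc 1 n \ {i}) ∩ (Set.Icc 1 n \ {j}) := by
      intro a' ha''
      rw [Set.mem_Icc] at ha''
      refine ⟨⟨Set.mem_Icc.mpr (by omega), ?_⟩, ⟨Set.mem_Icc.mpr (by omega), ?_⟩⟩ <;>
        · rw [Set.mem_singleton_iff]; omega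
    have hsub2 : Set.Icc (i + 1) (j - 1) ⊆ (Set.Icc 1 n \ {i}) ∩ (Set.Icc 1 n \ {j}) := by
      intro a' ha''
      rw [Set.mem_Icc] at ha''
      refine ⟨⟨Set.mem_Icc.mpr (by omega), ?_⟩, ⟨Set.mem_Icc.mpr (by omega), ?_⟩⟩ <;>
        · rw [Set.mem_singleton_iff]; omega
    have hsub3 : Set.Icc (j + 1) n ⊆ (Set.Icc 1 n \ {i}) ∩ (Set.Icc 1 n \ {j}) := by
      intro a' ha''
      rw [Set.mem_Icc] at ha''
      refine ⟨⟨Set.mem_Icc.mpr (by omega), ?_⟩, ⟨Set.mem_Icc.mpr (by omega), ?_⟩⟩ <;>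
        · rw [Set.mem_singleton_iff]; omega
    exact mul_mem (mul_mem (GJ_mono t hsub1 ha') (inv_mem (GJ_mono t hsub2 hg)))
      (GJ_mono t hsub3 hd')
  -- core case: `i ∉ J`, `j ∉ K`, `i < j`
  have core : ∀ J K : Set ℕ, J ⊆ Set.Icc 1 n → K ⊆ Set.Icc 1 n →
      ∀ i j : ℕ, i ∈ Set.Icc 1 n → j ∈ Set.Icc 1 n → i ∉ J → j ∉ K → i < j →
      GJ t J ⊓ GJ t K = GJ t (J ∩ K) := by
    intro J K hJ hK i j hi hj hiJ hjK hij
    have hi' := Set.mem_Icc.mp hi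
    have hj' := Set.mem_Icc.mp hj
    have hJsub : J ⊆ Set.Icc 1 n \ {i} := by
      intro a ha
      exact ⟨hJ ha, by rw [Set.mem_singleton_iff]; rintro rfl; exact hiJ ha⟩
    have hKsub : K ⊆ Set.Icc 1 n \ {j} := by
      intro a ha
      exact ⟨hK ha, by rw [Set.mem_singleton_iff]; rintro rfl; exact hjK ha⟩
    set D := (Set.Icc 1 n \ {i}) ∩ (Set.Icc 1 n \ {j}) with hDdef
    have hD : GJ t J ⊓ GJ t K ≤ GJ t D :=
      le_trans (inf_le_inf (GJ_mono t hJsub) (GJ_mono t hKsub))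
        (Q i j hi'.1 hij hj'.2)
    have e1 : GJ t J ⊓ GJ t D = GJ t (J ∩ D) :=
      W i hi J D hJsub Set.inter_subset_left
    have e2 : GJ t K ⊓ GJ t D = GJ t (K ∩ D) :=
      W j hj K D hKsub Set.inter_subset_right
    have e3 : GJ t (J ∩ D) ⊓ GJ t (K ∩ D) = GJ t ((J ∩ D) ∩ (K ∩ D)) :=
      W i hi _ _ (fun a ha => hJsub ha.1)
        (fun a ha => Set.inter_subset_left ha.2)
    have hset : (J ∩ D) ∩ (K ∩ D) = J ∩ K := by
      ext a
      constructor
      · rintro ⟨⟨haJ, _⟩, ⟨haK, _⟩⟩; exact ⟨haJ, haK⟩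
      · rintro ⟨haJ, haK⟩
        exact ⟨⟨haJ, ⟨hJsub haJ, hKsub haK⟩⟩, ⟨haK, ⟨hJsub haJ, hKsub haK⟩⟩⟩
    calc GJ t J ⊓ GJ t K = GJ t D ⊓ (GJ t J ⊓ GJ t K) := by
          rw [inf_eq_right.mpr hD]
      _ = GJ t D ⊓ GJ t J ⊓ (GJ t D ⊓ GJ t K) := inf_inf_distrib_left _ _ _
      _ = GJ t (J ∩ D) ⊓ GJ t (K ∩ D) := by
          rw [inf_comm (GJ t D) (GJ t J), inf_comm (GJ t D) (GJ t K), e1, e2]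
      _ = GJ t ((J ∩ D) ∩ (K ∩ D)) := e3
      _ = GJ t (J ∩ K) := by rw [hset]
  -- main proof
  intro J K hJ hK
  by_cases hJ' : ∃ i ∈ Set.Icc 1 n, i ∉ J
  · by_cases hK' : ∃ j ∈ Set.Icc 1 n, j ∉ K
    · obtain ⟨i, hi, hiJ⟩ := hJ'
      obtain ⟨j, hj, hjK⟩ := hK'
      rcases lt_trichotomy i j with h | h | h
      · exact core J K hJ hK i j hi hj hiJ hjK h
      · subst h
        have hJsub : J ⊆ Set.Icc 1 n \ {i} := by
          intro a ha
          exact ⟨hJ ha, by rw [Set.mem_singleton_iff]; rintro rfl; exact hiJ ha⟩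
        have hKsub : K ⊆ Set.Icc 1 n \ {i} := by
          intro a ha
          exact ⟨hK ha, by rw [Set.mem_singleton_iff]; rintro rfl; exact hjK ha⟩
        exact W i hi J K hJsub hKsub
      · rw [inf_comm, Set.inter_comm]
        exact core K J hK hJ j i hj hi hjK hiJ h
    · push_neg at hK'
      have hKall : K = Set.Icc 1 n := le_antisymm hK hK'
      have hJK : J ⊆ K := hKall ▸ hJ
      have hset : J ∩ K = J := by
        ext a; exact ⟨fun h => h.1, fun h => ⟨h, hJK h⟩⟩
      rw [hset]
      exact le_antisymm inf_le_left (le_inf le_rfl (GJ_mono t hJK))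
  · push_neg at hJ'
    have hJall : J = Set.Icc 1 n := le_antisymm hJ hJ'
    have hKJ : K ⊆ J := hJall ▸ hK
    have hset : J ∩ K = K := by
      ext a; exact ⟨fun h => h.2, fun h => ⟨hKJ h, h⟩⟩
    rw [hset]
    exact le_antisymm inf_le_right (le_inf (GJ_mono t hKJ) le_rfl)
end

section
/- Let n ≥ 8, m = n−4, and 4 ≤ k ≤ m. In Sym(2n), with t₃ = (2,3)(n+2,n+3)(6,7)(n+6,n+7) and tᵢ = (i+3,i+4)(n+i+3,n+i+4) for 4 ≤ i ≤ k, the subgroup ⟨t₃, t₄, ..., t_k⟩ is isomorphic to ℤ₂ × Sym(k−1). -/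
open Equiv

/-- The generators `t₁, …, t_m` (`m = n − 4`) of the second family, as
permutations of `ℕ` (elements of `Sym(2n)` on `{1,…,2n}`):
`t₁ = (2,3)(n+2,n+3)(4,5)(n+4,n+5)∏_{i=6}^{n}(i,n+i)`,
`t₂ = (1,2)(n+1,n+2)(3,4)(n+3,n+4)(5,6)(n+5,n+6)∏_{i=7}^{n}(i,n+i)`,
`t₃ = (2,3)(n+2,n+3)(6,7)(n+6,n+7)`, and
`t_k = (k+3,k+4)(n+k+3,n+k+4)` for `k ≥ 4`. -/
def t (n k : ℕ) : Equiv.Perm ℕ :=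
  if k = 1 then
    Equiv.swap 2 3 * Equiv.swap (n+2) (n+3) * Equiv.swap 4 5 * Equiv.swap (n+4) (n+5) *
      ((List.range (n - 5)).map (fun j => Equiv.swap (6 + j) (n+6+j))).prod
  else if k = 2 then
    Equiv.swap 1 2 * Equiv.swap (n+1) (n+2) * Equiv.swap 3 4 * Equiv.swap (n+3) (n+4) *
      Equiv.swap 5 6 * Equiv.swap (n+5) (n+6) *
      ((List.range (n - 6)).map (fun j => Equiv.swap (7 + j) (n+7+j))).prod
  else if k = 3 then
    Equiv.swap 2 3 * Equiv.swap (n+2) (n+3) * Equiv.swap 6 7 * Equiv.swap (n+6) (n+7)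
  else
    Equiv.swap (k+3) (k+4) * Equiv.swap (n+k+3) (n+k+4)

/-- The product `t₁t₂⋯t_k` of the first `k` generators in increasing order. -/
def tProd (n k : ℕ) : Equiv.Perm ℕ :=
  ((List.range k).map (fun i => t n (i+1))).prod

/-- `∏_{i=1}^{k}(i, n+i)`. -/
def bigSwap (n k : ℕ) : Equiv.Perm ℕ :=
  ((List.range k).map (fun i => Equiv.swap (i+1) (n+(i+1)))).prod

/-! With `K = k - 1`, the map `ℤ₂ × Sym(K) → Sym(ℕ)` sending `(ε, σ)` to
`((2,3)(n+2,n+3))^ε` times two copies of `σ`, one acting on `[6, 6 + K)` and one on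
`[n + 6, n + 6 + K)`, is an injective homomorphism, as the three pieces have disjoint supports.
It sends `(1, (0 1))` to `t₃` and `(0, (i-3, i-2))` to `tᵢ`, and these elements generate
`ℤ₂ × Sym(K)`: the transposition `(0 1)` is conjugate to `(1 2)` inside `⟨(0 1), (1 2)⟩`,
and the `ℤ₂`-components of the conjugating factors cancel. -/

open Equiv.Perm Subgroup

section ZModTwo

lemma eq_one_or_eq_ofAdd_one (x : Multiplicative (ZMod 2)) : x = 1 ∨ x = .ofAdd 1 := by
  revert x
  decide

variable {G : Type*} [Group G]

def zmodTwoHom (g : G) (hg : g ^ 2 = 1) : Multiplicative (ZMod 2) →* G where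
  toFun x := g ^ (Multiplicative.toAdd x).val
  map_one' := pow_zero g
  map_mul' a b := by simp only [toAdd_mul, ZMod.val_add, ← pow_eq_pow_mod _ hg, pow_add]

lemma zmodTwoHom_ofAdd_one (g : G) (hg : g ^ 2 = 1) :
    zmodTwoHom g hg (Multiplicative.ofAdd 1) = g :=
  pow_one g

lemma zmodTwoHom_injective {g : G} (hg : g ^ 2 = 1) (hg1 : g ≠ 1) :
    Function.Injective (zmodTwoHom g hg) := by
  rw [injective_iff_map_eq_one]
  intro x hgx
  obtain rfl | rfl := eq_one_or_eq_ofAdd_one x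
  · rfl
  · exact absurd ((zmodTwoHom_ofAdd_one g hg).symm.trans hgx) hg1

end ZModTwo

section Generation

variable {m : ℕ}

lemma eq_top_of_ofAdd_one_swap_mem {H : Subgroup (Multiplicative (ZMod 2) × Perm (Fin (m + 3)))}
    (h₀ : (Multiplicative.ofAdd 1, swap 0 1) ∈ H)
    (h : ∀ i : Fin (m + 2), i ≠ 0 → (1, swap i.castSucc i.succ) ∈ H) : H = ⊤ := by
  have h₀₂_ne : (0 : Fin (m + 3)) ≠ 2 := by simp [Fin.ext_iff, Nat.mod_eq_of_lt]
  have h₁₂_ne : (1 : Fin (m + 3)) ≠ 2 := by simp [Fin.ext_iff, Nat.mod_eq_of_lt]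
  have h₁₂ : ((1 : Multiplicative (ZMod 2)), swap (1 : Fin (m + 3)) 2) ∈ H := by
    simpa using h 1 (by simp)
  have h₀₂ : ((1 : Multiplicative (ZMod 2)), swap (0 : Fin (m + 3)) 2) ∈ H := by
    convert mul_mem (mul_mem h₀ h₁₂) h₀ using 1
    have hε : (Multiplicative.ofAdd 1 : Multiplicative (ZMod 2)) * 1 * .ofAdd 1 = 1 := by decide
    rw [Prod.mk_mul_mk, Prod.mk_mul_mk, hε, swap_comm 0 1, swap_comm 1 2,
      swap_mul_swap_mul_swap h₁₂_ne.symm h₀₂_ne.symm]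
  have h₀₁ : ((1 : Multiplicative (ZMod 2)), swap (0 : Fin (m + 3)) 1) ∈ H := by
    convert mul_mem (mul_mem h₀₂ h₁₂) h₀₂ using 1
    rw [Prod.mk_mul_mk, Prod.mk_mul_mk, swap_comm 0 2,
      swap_mul_swap_mul_swap h₁₂_ne zero_ne_one.symm, mul_one, mul_one]
  have hinr : ∀ σ, ((1 : Multiplicative (ZMod 2)), σ) ∈ H := by
    suffices (⊤ : Subgroup (Perm (Fin (m + 3)))).map (MonoidHom.inr _ _) ≤ H from
      fun σ ↦ this ⟨σ, mem_top σ, rfl⟩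
    rw [← closure_eq_top_of_mclosure_eq_top (mclosure_swap_castSucc_succ _), MonoidHom.map_closure,
      closure_le]
    rintro _ ⟨_, ⟨i, rfl⟩, rfl⟩
    obtain rfl | hi := eq_or_ne i 0
    · exact h₀₁
    · exact h i hi
  have hinl : ((.ofAdd 1 : Multiplicative (ZMod 2)), (1 : Perm (Fin (m + 3)))) ∈ H := by
    simpa using mul_mem h₀ h₀₁
  rw [eq_top_iff]
  rintro ⟨x, σ⟩ -
  obtain rfl | rfl := eq_one_or_eq_ofAdd_one x
  · exact hinr σ
  · simpa using mul_mem hinl (hinr σ)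

end Generation

section Interval

variable (a m : ℕ)

def finEquivIco : Fin m ≃ {x : ℕ // a ≤ x ∧ x < a + m} where
  toFun j := ⟨a + j, Nat.le_add_right _ _, by omega⟩
  invFun x := ⟨x.1 - a, by omega⟩
  left_inv j := by ext; simp
  right_inv x := by ext; simp; omega

def permOnIco : Perm (Fin m) →* Perm ℕ :=
  extendDomainHom (finEquivIco a m)

variable {a m}

lemma permOnIco_apply_of_not_mem (σ : Perm (Fin m)) {x : ℕ} (hx : ¬(a ≤ x ∧ x < a + m)) :
    permOnIco a m σ x = x :=
  extendDomain_apply_not_subtype _ _ hx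

lemma permOnIco_apply_add (σ : Perm (Fin m)) (j : Fin m) :
    permOnIco a m σ (a + j) = a + σ j := by
  simpa [finEquivIco, permOnIco] using extendDomain_apply_image σ (finEquivIco a m) j

lemma permOnIco_swap (i j : Fin m) :
    permOnIco a m (swap i j) = swap (a + i) (a + j) := by
  ext x
  by_cases hx : a ≤ x ∧ x < a + m
  · obtain ⟨y, rfl⟩ : ∃ y : Fin m, x = a + y := ⟨⟨x - a, by omega⟩, by simp; omega⟩
    rw [permOnIco_apply_add, swap_apply_def, swap_apply_def]
    split_ifs <;> simp_all [Fin.ext_iff]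
  · rw [permOnIco_apply_of_not_mem _ hx, swap_apply_of_ne_of_ne] <;> omega

lemma disjoint_permOnIco {b m' : ℕ} (h : a + m ≤ b ∨ b + m' ≤ a)
    (σ : Perm (Fin m)) (τ : Perm (Fin m')) :
    Disjoint (permOnIco a m σ) (permOnIco b m' τ) := by
  intro x
  by_cases hx : a ≤ x ∧ x < a + m
  · exact .inr (permOnIco_apply_of_not_mem τ (by omega))
  · exact .inl (permOnIco_apply_of_not_mem σ hx)

end Interval

section Doubled

variable {a b m : ℕ}

def doubledPerm (a b m : ℕ) (h : a + m ≤ b) : Perm (Fin m) →* Perm ℕ :=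
  (MonoidHom.noncommCoprod (permOnIco a m) (permOnIco b m)
    fun σ τ ↦ (disjoint_permOnIco (.inl h) σ τ).commute).comp
    ((MonoidHom.id _).prod (MonoidHom.id _))

lemma doubledPerm_apply (h : a + m ≤ b) (σ : Perm (Fin m)) :
    doubledPerm a b m h σ = permOnIco a m σ * permOnIco b m σ :=
  rfl

lemma doubledPerm_apply_add_left (h : a + m ≤ b) (σ : Perm (Fin m)) (j : Fin m) :
    doubledPerm a b m h σ (a + j) = a + σ j := by
  rw [doubledPerm_apply, Perm.mul_apply, permOnIco_apply_of_not_mem (a := b) _ (by omega),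
    permOnIco_apply_add]

lemma doubledPerm_injective (h : a + m ≤ b) : Function.Injective (doubledPerm a b m h) := by
  intro σ τ hστ
  ext j
  simpa [doubledPerm_apply_add_left] using congr($hστ (a + j))

lemma doubledPerm_swap (h : a + m ≤ b) (i j : Fin m) :
    doubledPerm a b m h (swap i j) = swap (a + i) (a + j) * swap (b + i) (b + j) := by
  rw [doubledPerm_apply, permOnIco_swap, permOnIco_swap]

lemma disjoint_doubledPerm {a' b' m' : ℕ} (hab : a + m ≤ b) (hab' : a' + m' ≤ b')
    (h₁ : a + m ≤ a') (h₂ : a' + m' ≤ b) (h₃ : b + m ≤ b')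
    (σ : Perm (Fin m)) (τ : Perm (Fin m')) :
    Disjoint (doubledPerm a b m hab σ) (doubledPerm a' b' m' hab' τ) := by
  rw [doubledPerm_apply, doubledPerm_apply]
  refine .mul_left (.mul_right ?_ ?_) (.mul_right ?_ ?_) <;>
    exact disjoint_permOnIco (by omega) _ _

end Doubled

section Embedding

variable {n K : ℕ}

/-- The embedding `ℤ₂ × Sym(K) → Sym(ℕ)`: the generator of `ℤ₂` goes to `(2,3)(n+2,n+3)` and
`σ` acts on `[6, 6 + K)` and on `[n + 6, n + 6 + K)`. -/
def tHom (n K : ℕ) (h : K + 4 ≤ n) : Multiplicative (ZMod 2) × Perm (Fin K) →* Perm ℕ :=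
  have hs : (swap 0 1 : Perm (Fin 2)) ^ 2 = 1 := by rw [sq, swap_mul_self]
  have h₁ : 2 + 2 ≤ n + 2 := by omega
  have h₂ : 6 + K ≤ n + 6 := by omega
  MonoidHom.noncommCoprod ((doubledPerm 2 (n + 2) 2 h₁).comp (zmodTwoHom (swap 0 1) hs))
    (doubledPerm 6 (n + 6) K h₂) fun _ _ ↦
      (disjoint_doubledPerm h₁ h₂ (by omega) (by omega) (by omega) _ _).commute

lemma tHom_apply (h : K + 4 ≤ n) (x : Multiplicative (ZMod 2)) (σ : Perm (Fin K)) :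
    tHom n K h (x, σ) = doubledPerm 2 (n + 2) 2 (by omega)
      (zmodTwoHom (swap 0 1) (by rw [sq, swap_mul_self]) x) *
      doubledPerm 6 (n + 6) K (by omega) σ :=
  rfl

lemma tHom_injective (h : K + 4 ≤ n) : Function.Injective (tHom n K h) := by
  rw [injective_iff_map_eq_one]
  rintro ⟨x, σ⟩ hxσ
  rw [tHom_apply, (disjoint_doubledPerm _ _ (by omega) (by omega) (by omega) _ _).mul_eq_one_iff,
    map_eq_one_iff _ (doubledPerm_injective _), map_eq_one_iff _ (doubledPerm_injective _),
    map_eq_one_iff _ (zmodTwoHom_injective _ (by decide))] at hxσ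
  rw [hxσ.1, hxσ.2, Prod.mk_one_one]

lemma tHom_ofAdd_one_swap_zero_one {m : ℕ} (h : m + 3 + 4 ≤ n) :
    tHom n (m + 3) h (Multiplicative.ofAdd 1, swap 0 1) = t n 3 := by
  rw [tHom_apply, zmodTwoHom_ofAdd_one, doubledPerm_swap, doubledPerm_swap, t]
  simp [mul_assoc]

lemma tHom_one_swap {m : ℕ} (h : m + 3 + 4 ≤ n) (i : Fin (m + 2)) (hi : i ≠ 0) :
    tHom n (m + 3) h (1, swap i.castSucc i.succ) = t n (i + 3) := by
  have hi₁ : 1 ≤ (i : ℕ) := Nat.one_le_iff_ne_zero.mpr (Fin.val_ne_zero_iff.mpr hi)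
  rw [tHom_apply, map_one, map_one, one_mul, doubledPerm_swap, t, if_neg (by omega),
    if_neg (by omega), if_neg (by omega), Fin.val_castSucc, Fin.val_succ]
  congr 2 <;> omega

end Embedding

theorem G3k_iso_general (n : ℕ) (m : ℕ) (hm : m = n - 4)
    (k : ℕ) (hk4 : 4 ≤ k) (hkm : k ≤ m) :
    Nonempty ((Subgroup.closure {x | x = t n 3 ∨ ∃ i, 4 ≤ i ∧ i ≤ k ∧ x = t n i} :
      Subgroup (Equiv.Perm ℕ)) ≃* (Multiplicative (ZMod 2) × Equiv.Perm (Fin (k - 1)))) := by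
  obtain ⟨j, rfl⟩ : ∃ j, k = j + 4 := ⟨k - 4, by omega⟩
  have h : j + 3 + 4 ≤ n := by omega
  have hrange : closure {x | x = t n 3 ∨ ∃ i, 4 ≤ i ∧ i ≤ j + 4 ∧ x = t n i} =
      (tHom n (j + 3) h).range := by
    apply le_antisymm
    · rw [closure_le]
      rintro _ (rfl | ⟨i, hi4, hik, rfl⟩)
      · exact ⟨_, tHom_ofAdd_one_swap_zero_one h⟩
      · refine ⟨_, (tHom_one_swap h ⟨i - 3, by omega⟩ (Fin.ne_of_val_ne (by simp; omega))).trans ?_⟩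
        rw [Fin.val_mk, Nat.sub_add_cancel (by omega)]
    · rw [MonoidHom.range_eq_map, map_le_iff_le_comap, top_le_iff]
      refine eq_top_of_ofAdd_one_swap_mem ?_ fun i hi ↦ ?_
      · rw [mem_comap, tHom_ofAdd_one_swap_zero_one]
        exact subset_closure (.inl rfl)
      · have hi₁ : 1 ≤ (i : ℕ) := Nat.one_le_iff_ne_zero.mpr (Fin.val_ne_zero_iff.mpr hi)
        rw [mem_comap, tHom_one_swap h i hi]
        exact subset_closure (.inr ⟨i + 3, by omega, by omega, rfl⟩)
  exact ⟨(MulEquiv.subgroupCongr hrange).trans (MonoidHom.ofInjective (tHom_injective h)).symm⟩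

/-- For `n ≥ 8`, `m = n − 4` and `4 ≤ k ≤ m`, the subgroup `⟨t₃,t₄,…,t_k⟩` of
`Sym(2n)` is isomorphic to `ℤ₂ × Sym(k−1)`. -/
theorem G3k_iso (n : ℕ) (hn : 8 ≤ n) (m : ℕ) (hm : m = n - 4)
    (k : ℕ) (hk4 : 4 ≤ k) (hkm : k ≤ m) :
    Nonempty ((Subgroup.closure {x | x = t n 3 ∨ ∃ i, 4 ≤ i ∧ i ≤ k ∧ x = t n i} :
      Subgroup (Equiv.Perm ℕ)) ≃* (Multiplicative (ZMod 2) × Equiv.Perm (Fin (k - 1)))) :=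
  G3k_iso_general n m hm k hk4 hkm
end
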